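/- arXiv:1005.3984 — 9 statements merged into one kernel-verified Lean document; each statement's English description precedes it below -/
import Mathlib

section
/- If Q is positive definite, then x₀ = Q⁻¹ *ᵥ (∫ t in (0:ℝ)..r, q t *ᵥ p t), i.e. the initial state is recovered exactly from the data p and q. (Reconstruction formula (2.12) of Proposition 2.3.) -/
open MeasureTheory intervalIntegral Matrix

attribute [local instance] Matrix.normedAddCommGroup Matrix.normedSpace

-- Continuity rather than interval integrability is assumed because, with the local matrix norm,
-- instance search does not find the `ENormedAddMonoid` that `IntervalIntegrable` needs.
theorem Matrix.intervalIntegral_mulVec_of_continuousOn {m n : Type*} [Fintype m] [Fintype n]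
    {μ : Measure ℝ} [IsLocallyFiniteMeasure μ] {a b : ℝ} {f : ℝ → Matrix m n ℝ}
    (hf : ContinuousOn f (Set.uIcc a b)) (v : n → ℝ) :
    ∫ t in a..b, f t *ᵥ v ∂μ = (∫ t in a..b, f t ∂μ) *ᵥ v := by
  classical
  exact (LinearMap.toContinuousLinearMap ((LinearMap.applyₗ v).comp
    (toLin' : Matrix m n ℝ ≃ₗ[ℝ] _).toLinearMap)).intervalIntegral_comp_comm
      hf.intervalIntegrable

theorem intervalIntegral_mulVec_transpose_mulVec {m n : Type*} [Fintype m] [Fintype n]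
    {a b : ℝ} {q : ℝ → Matrix m n ℝ} (hq : ContinuousOn q (Set.uIcc a b))
    {p : ℝ → n → ℝ} {x : m → ℝ} (hp : ∀ t ∈ Set.uIcc a b, p t = (q t)ᵀ *ᵥ x) :
    ∫ t in a..b, q t *ᵥ p t = (∫ t in a..b, q t * (q t)ᵀ) *ᵥ x := by
  have hqqT : ContinuousOn (fun t => q t * (q t)ᵀ) (Set.uIcc a b) :=
    (continuous_id.matrix_mul continuous_id.matrix_transpose).comp_continuousOn hq
  rw [← intervalIntegral_mulVec_of_continuousOn hqqT]
  refine integral_congr fun t ht => ?_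
  simp only [hp t ht, mulVec_mulVec]

theorem stmt_3_general (n k : ℕ) (r : ℝ) (hr : 0 < r)
    (q : ℝ → Matrix (Fin n) (Fin k) ℝ) (p : ℝ → (Fin k → ℝ))
    (hq : ContinuousOn q (Set.Icc 0 r))
    (Q : Matrix (Fin n) (Fin n) ℝ) (hQ : Q = ∫ t in (0:ℝ)..r, q t * (q t)ᵀ)
    (x₀ : Fin n → ℝ) (hx₀ : ∀ t ∈ Set.Icc (0:ℝ) r, p t = (q t)ᵀ *ᵥ x₀)
    (hQpd : Q.PosDef) :
    x₀ = Q⁻¹ *ᵥ (∫ t in (0:ℝ)..r, q t *ᵥ p t) := by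
  rw [← Set.uIcc_of_le hr.le] at hq hx₀
  have : Invertible Q := hQpd.isUnit.invertible
  rw [intervalIntegral_mulVec_transpose_mulVec hq hx₀, ← hQ, inv_mulVec_eq_vec rfl]

/-- Reconstruction formula (2.12) of Proposition 2.3: if `Q` is positive
definite, then `x₀ = Q⁻¹ *ᵥ ∫ t in 0..r, q t *ᵥ p t`, i.e. the initial state is
recovered exactly from the data `p` and `q`. -/
theorem stmt_3 (n k : ℕ) (hn : 1 ≤ n) (hk : 1 ≤ k) (r : ℝ) (hr : 0 < r)
    (q : ℝ → Matrix (Fin n) (Fin k) ℝ) (p : ℝ → (Fin k → ℝ))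
    (hq : ContinuousOn q (Set.Icc 0 r)) (hp : ContinuousOn p (Set.Icc 0 r))
    (Q : Matrix (Fin n) (Fin n) ℝ) (hQ : Q = ∫ t in (0:ℝ)..r, q t * (q t)ᵀ)
    (x₀ : Fin n → ℝ) (hx₀ : ∀ t ∈ Set.Icc (0:ℝ) r, p t = (q t)ᵀ *ᵥ x₀)
    (hQpd : Q.PosDef) :
    x₀ = Q⁻¹ *ᵥ (∫ t in (0:ℝ)..r, q t *ᵥ p t) :=
  stmt_3_general n k r hr q p hq Q hQ x₀ hx₀ hQpd
end

section
/- If Q is not positive definite, then for every ε > 0 there exists ξ ∈ ℝⁿ with ξ ≠ x₀, ‖ξ - x₀‖ ≤ ε, and R ξ = 0; in particular x₀ is not the unique minimizer of R over any open neighbourhood of x₀. (Implication (b) ⇒ (c) of Proposition 2.3, in contrapositive form.) -/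
open MeasureTheory intervalIntegral Matrix

attribute [local instance] Matrix.normedAddCommGroup Matrix.normedSpace

/-!
`Q` is an integral of the positive semidefinite matrices `q t * (q t)ᵀ`, so it is positive
semidefinite; not being positive definite, it is singular, with some `v ≠ 0` in its kernel.
Since `p = qᵀ x₀` on `[0, r]`, the residual satisfies `R (x₀ + w) = wᵀ Q w`, which vanishes on
the whole line `x₀ + ℝ v`.
-/

namespace Matrix

variable {m n : Type*} [Fintype m] [Fintype n] {a b : ℝ}

theorem transpose_intervalIntegral (M : ℝ → Matrix m n ℝ) :
    (∫ t in a..b, M t)ᵀ = ∫ t in a..b, (M t)ᵀ :=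
  let L : Matrix m n ℝ →ₗᵢ[ℝ] Matrix n m ℝ :=
    { transposeLinearEquiv m n ℝ ℝ with norm_map' := norm_transpose }
  (L.intervalIntegral_comp_comm M).symm

theorem dotProduct_intervalIntegral_mulVec {M : ℝ → Matrix m n ℝ}
    (hM : ContinuousOn M (Set.uIcc a b)) (w : m → ℝ) (v : n → ℝ) :
    w ⬝ᵥ (∫ t in a..b, M t) *ᵥ v = ∫ t in a..b, w ⬝ᵥ M t *ᵥ v :=
  let L : Matrix m n ℝ →ₗ[ℝ] ℝ := (dotProductBilin ℝ ℝ w).comp ((mulVecBilin ℝ ℝ).flip v)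
  (L.toContinuousLinearMap.intervalIntegral_comp_comm hM.intervalIntegrable).symm

theorem PosSemidef.intervalIntegral {M : ℝ → Matrix n n ℝ} (hab : a ≤ b)
    (hM : ContinuousOn M (Set.Icc a b)) (hpos : ∀ t ∈ Set.Icc a b, (M t).PosSemidef) :
    (∫ t in a..b, M t).PosSemidef := by
  rw [← Set.uIcc_of_le hab] at hM hpos
  refine .of_dotProduct_mulVec_nonneg ?_ fun v ↦ ?_
  · rw [IsHermitian, conjTranspose_eq_transpose_of_trivial, transpose_intervalIntegral]
    exact integral_congr fun t ht ↦ (hpos t ht).isHermitian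
  · rw [star_trivial, dotProduct_intervalIntegral_mulVec hM]
    refine integral_nonneg hab fun t ht ↦ ?_
    simpa only [star_trivial] using (hpos t (Set.Icc_subset_uIcc ht)).dotProduct_mulVec_nonneg v

theorem dotProduct_mul_transpose_mulVec (A : Matrix n m ℝ) (v : n → ℝ) :
    v ⬝ᵥ (A * Aᵀ) *ᵥ v = ‖(EuclideanSpace.equiv m ℝ).symm (Aᵀ *ᵥ v)‖ ^ 2 := by
  rw [← mulVec_mulVec, dotProduct_mulVec, mulVec_transpose, EuclideanSpace.real_norm_sq_eq]
  simp [dotProduct, sq]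

open scoped ComplexOrder in
theorem PosSemidef.exists_mulVec_eq_zero_of_not_posDef {𝕜 : Type*} [RCLike 𝕜] [DecidableEq n]
    {M : Matrix n n 𝕜} (hM : M.PosSemidef) (h : ¬ M.PosDef) : ∃ v ≠ 0, M *ᵥ v = 0 :=
  exists_mulVec_eq_zero_iff.mpr (not_not.mp (hM.posDef_iff_det_ne_zero.not.mp h))

theorem intervalIntegral_norm_sq_sub_transpose_mulVec_add {q : ℝ → Matrix n m ℝ} {p : ℝ → m → ℝ}
    {x₀ : n → ℝ} (hq : ContinuousOn q (Set.uIcc a b))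
    (hx₀ : ∀ t ∈ Set.uIcc a b, p t = (q t)ᵀ *ᵥ x₀) (w : n → ℝ) :
    ∫ t in a..b, ‖(EuclideanSpace.equiv m ℝ).symm (p t - (q t)ᵀ *ᵥ (x₀ + w))‖ ^ 2 =
      w ⬝ᵥ (∫ t in a..b, q t * (q t)ᵀ) *ᵥ w := by
  rw [dotProduct_intervalIntegral_mulVec (by fun_prop)]
  refine integral_congr fun t ht ↦ ?_
  rw [hx₀ t ht, mulVec_add, sub_add_cancel_left, map_neg, norm_neg,
    dotProduct_mul_transpose_mulVec]

end Matrix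

theorem stmt_4_general (n k : ℕ) (r : ℝ) (hr : 0 < r)
    (q : ℝ → Matrix (Fin n) (Fin k) ℝ) (p : ℝ → (Fin k → ℝ))
    (hq : ContinuousOn q (Set.Icc 0 r))
    (Q : Matrix (Fin n) (Fin n) ℝ) (hQ : Q = ∫ t in (0:ℝ)..r, q t * (q t)ᵀ)
    (R : (Fin n → ℝ) → ℝ)
    (hR : ∀ ξ : Fin n → ℝ, R ξ = ∫ t in (0:ℝ)..r,
      ‖(EuclideanSpace.equiv (Fin k) ℝ).symm (p t - (q t)ᵀ *ᵥ ξ)‖ ^ 2)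
    (x₀ : Fin n → ℝ) (hx₀ : ∀ t ∈ Set.Icc (0:ℝ) r, p t = (q t)ᵀ *ᵥ x₀)
    (hQpd : ¬ Q.PosDef) :
    ∀ ε > (0:ℝ), ∃ ξ : Fin n → ℝ, ξ ≠ x₀ ∧
      ‖(EuclideanSpace.equiv (Fin n) ℝ).symm (ξ - x₀)‖ ≤ ε ∧ R ξ = 0 := by
  intro ε hε
  have hQpsd : Q.PosSemidef :=
    hQ ▸ PosSemidef.intervalIntegral hr.le (by fun_prop) fun t _ ↦
      posSemidef_self_mul_conjTranspose (q t)
  obtain ⟨v, hv0, hQv⟩ := hQpsd.exists_mulVec_eq_zero_of_not_posDef hQpd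
  set e := EuclideanSpace.equiv (Fin n) ℝ
  have hv : 0 < ‖e.symm v‖ := norm_pos_iff.mpr (by simpa using hv0)
  refine ⟨x₀ + (ε / ‖e.symm v‖) • v, ?_, ?_, ?_⟩
  · simp [hv0, hε.ne', hv.ne']
  · rw [add_sub_cancel_left, map_smul, norm_smul, Real.norm_of_nonneg (by positivity),
      div_mul_cancel₀ _ hv.ne']
  · rw [← Set.uIcc_of_le hr.le] at hq hx₀
    rw [hR, intervalIntegral_norm_sq_sub_transpose_mulVec_add hq hx₀, ← hQ, mulVec_smul, hQv,
      smul_zero, dotProduct_zero]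

/-- Implication (b) ⇒ (c) of Proposition 2.3 in contrapositive form: if `Q` is
not positive definite, then for every `ε > 0` there is `ξ ≠ x₀` with
`‖ξ - x₀‖ ≤ ε` (Euclidean norm) and `R ξ = 0`; in particular `x₀` is not the
unique minimizer of `R` over any open neighbourhood of `x₀`. -/
theorem stmt_4 (n k : ℕ) (hn : 1 ≤ n) (hk : 1 ≤ k) (r : ℝ) (hr : 0 < r)
    (q : ℝ → Matrix (Fin n) (Fin k) ℝ) (p : ℝ → (Fin k → ℝ))
    (hq : ContinuousOn q (Set.Icc 0 r)) (hp : ContinuousOn p (Set.Icc 0 r))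
    (Q : Matrix (Fin n) (Fin n) ℝ) (hQ : Q = ∫ t in (0:ℝ)..r, q t * (q t)ᵀ)
    (R : (Fin n → ℝ) → ℝ)
    (hR : ∀ ξ : Fin n → ℝ, R ξ = ∫ t in (0:ℝ)..r,
      ‖(EuclideanSpace.equiv (Fin k) ℝ).symm (p t - (q t)ᵀ *ᵥ ξ)‖ ^ 2)
    (x₀ : Fin n → ℝ) (hx₀ : ∀ t ∈ Set.Icc (0:ℝ) r, p t = (q t)ᵀ *ᵥ x₀)
    (hQpd : ¬ Q.PosDef) :
    ∀ ε > (0:ℝ), ∃ ξ : Fin n → ℝ, ξ ≠ x₀ ∧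
      ‖(EuclideanSpace.equiv (Fin n) ℝ).symm (ξ - x₀)‖ ≤ ε ∧ R ξ = 0 :=
  stmt_4_general n k r hr q p hq Q hQ R hR x₀ hx₀ hQpd
end

section
/- For all t ∈ [0, r], p t = (q t)ᵀ *ᵥ x₀, i.e. the output-derived quantity p is a linear function of the unknown initial state x₀ with coefficient matrix q t. (Equation (2.5) of Fact I.) -/
/-!
`x - θ` and `t ↦ Φ t *ᵥ x₀` solve the same linear equation `z' = A z` with `z 0 = x₀`, so they
agree on `[0, r]` by Grönwall uniqueness. Integrating `y' = f + Cᵀ x` then leaves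
`p t = ∫₀ᵗ Cᵀ (x - θ) = ∫₀ᵗ Cᵀ Φ x₀ = (q t)ᵀ x₀`.
-/

open MeasureTheory intervalIntegral Matrix

attribute [local instance] Matrix.normedAddCommGroup Matrix.normedSpace

open Set

theorem ODE_linear_solution_unique_of_mem_Icc_right {E : Type*} [NormedAddCommGroup E]
    [NormedSpace ℝ E] {A : ℝ → E →L[ℝ] E} {a b : ℝ} (hA : ContinuousOn A (Icc a b))
    {z w : ℝ → E} (hz : ∀ t ∈ Icc a b, HasDerivWithinAt z (A t (z t)) (Icc a b) t)
    (hw : ∀ t ∈ Icc a b, HasDerivWithinAt w (A t (w t)) (Icc a b) t) (ha : z a = w a) :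
    EqOn z w (Icc a b) := by
  obtain ⟨K, hK⟩ := isCompact_Icc.exists_bound_of_continuousOn hA
  have hLip : ∀ t ∈ Ico a b, LipschitzOnWith K.toNNReal (A t) univ := fun t ht =>
    ((A t).lipschitz.weaken <| by
      simpa [← norm_toNNReal] using Real.toNNReal_le_toNNReal (hK t (Ico_subset_Icc_self ht))
      ).lipschitzOnWith
  have hIci : ∀ {u : ℝ → E}, (∀ t ∈ Icc a b, HasDerivWithinAt u (A t (u t)) (Icc a b) t) →
      ∀ t ∈ Ico a b, HasDerivWithinAt u (A t (u t)) (Ici t) t := fun hu t ht =>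
    (hu t (Ico_subset_Icc_self ht)).mono_of_mem_nhdsWithin (Icc_mem_nhdsGE_of_mem ht)
  exact ODE_solution_unique_of_mem_Icc_right hLip
    (fun t ht => (hz t ht).continuousWithinAt) (hIci hz) (fun _ _ => mem_univ _)
    (fun t ht => (hw t ht).continuousWithinAt) (hIci hw) (fun _ _ => mem_univ _) ha

theorem Matrix.ODE_mulVec_solution_unique_of_mem_Icc_right {ι : Type*} [Fintype ι]
    {A : ℝ → Matrix ι ι ℝ} {a b : ℝ} (hA : ContinuousOn A (Icc a b)) {z w : ℝ → ι → ℝ}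
    (hz : ∀ t ∈ Icc a b, HasDerivWithinAt z (A t *ᵥ z t) (Icc a b) t)
    (hw : ∀ t ∈ Icc a b, HasDerivWithinAt w (A t *ᵥ w t) (Icc a b) t) (ha : z a = w a) :
    EqOn z w (Icc a b) :=
  let L : Matrix ι ι ℝ →ₗ[ℝ] (ι → ℝ) →L[ℝ] (ι → ℝ) :=
    LinearMap.toContinuousLinearMap.toLinearMap ∘ₗ mulVecBilin ℝ ℝ
  ODE_linear_solution_unique_of_mem_Icc_right (A := fun t => L (A t))
    (L.continuous_of_finiteDimensional.comp_continuousOn hA) hz hw ha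

theorem HasDerivWithinAt.matrix_mulVec_const {m n : Type*} [Fintype m] [Fintype n]
    {Φ : ℝ → Matrix m n ℝ} {Φ' : Matrix m n ℝ} {s : Set ℝ} {t : ℝ}
    (h : HasDerivWithinAt Φ Φ' s t) (v : n → ℝ) :
    HasDerivWithinAt (fun t => Φ t *ᵥ v) (Φ' *ᵥ v) s t := by
  exact (LinearMap.toContinuousLinearMap ((mulVecBilin ℝ ℝ).flip v)).hasFDerivAt
    |>.comp_hasDerivWithinAt t h

theorem Matrix.ODE_affine_solution_sub_eqOn_mulVec {ι : Type*} [Fintype ι] [DecidableEq ι]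
    {A : ℝ → Matrix ι ι ℝ} {g : ℝ → ι → ℝ} {a b : ℝ} (hA : ContinuousOn A (Icc a b))
    {x θ : ℝ → ι → ℝ} {Φ : ℝ → Matrix ι ι ℝ}
    (hx : ∀ t ∈ Icc a b, HasDerivWithinAt x (A t *ᵥ x t + g t) (Icc a b) t)
    (hθ : ∀ t ∈ Icc a b, HasDerivWithinAt θ (A t *ᵥ θ t + g t) (Icc a b) t)
    (hΦ : ∀ t ∈ Icc a b, HasDerivWithinAt Φ (A t * Φ t) (Icc a b) t) (hΦa : Φ a = 1) :
    EqOn (fun t => x t - θ t) (fun t => Φ t *ᵥ (x a - θ a)) (Icc a b) :=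
  ODE_mulVec_solution_unique_of_mem_Icc_right hA
    (fun t ht => ((hx t ht).sub (hθ t ht)).congr_deriv (by rw [mulVec_sub]; abel))
    (fun t ht => ((hΦ t ht).matrix_mulVec_const _).congr_deriv (mulVec_mulVec ..).symm)
    (by simp [hΦa])

/-- With the sup-norm structure as a local instance, the norm topology on matrices is not
reducibly the product topology, so instance search cannot find this on its own. -/
abbrev Matrix.enormedAddMonoid {m n : Type*} [Fintype m] [Fintype n] :
    ENormedAddMonoid (Matrix m n ℝ) :=
  NormedAddGroup.toENormedAddMonoid

attribute [local instance] Matrix.enormedAddMonoid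

theorem intervalIntegral.integral_vecMul {m n : Type*} [Fintype m] [Fintype n] (v : m → ℝ)
    {F : ℝ → Matrix m n ℝ} {a b : ℝ} (hF : IntervalIntegrable F volume a b) :
    ∫ s in a..b, v ᵥ* F s = v ᵥ* ∫ s in a..b, F s :=
  (LinearMap.toContinuousLinearMap (vecMulBilin ℝ ℝ v)).intervalIntegral_comp_comm hF

theorem intervalIntegral.integral_eq_sub_of_hasDerivWithinAt_Icc {E : Type*}
    [NormedAddCommGroup E] [NormedSpace ℝ E] [CompleteSpace E] {f f' : ℝ → E} {a b : ℝ}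
    (hab : a ≤ b) (hf : ∀ t ∈ Icc a b, HasDerivWithinAt f (f' t) (Icc a b) t)
    (hint : IntervalIntegrable f' volume a b) : ∫ t in a..b, f' t = f b - f a :=
  integral_eq_sub_of_hasDeriv_right_of_le hab (fun t ht => (hf t ht).continuousWithinAt)
    (fun t ht => ((hf t (Ioo_subset_Icc_self ht)).mono_of_mem_nhdsWithin
      (Icc_mem_nhdsGE_of_mem ⟨ht.1.le, ht.2⟩)).mono Ioi_subset_Ici_self) hint

theorem stmt_7_general (n k : ℕ) (r : ℝ)
    (A : ℝ → Matrix (Fin n) (Fin n) ℝ) (b : ℝ → (Fin n → ℝ))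
    (C : ℝ → Matrix (Fin n) (Fin k) ℝ) (f : ℝ → (Fin k → ℝ))
    (hA : ContinuousOn A (Set.Icc 0 r))
    (hC : ContinuousOn C (Set.Icc 0 r)) (hf : ContinuousOn f (Set.Icc 0 r))
    (x : ℝ → (Fin n → ℝ)) (y : ℝ → (Fin k → ℝ)) (x₀ : Fin n → ℝ)
    (hx : ∀ t ∈ Set.Icc (0:ℝ) r,
      HasDerivWithinAt x (A t *ᵥ x t + b t) (Set.Icc 0 r) t)
    (hy : ∀ t ∈ Set.Icc (0:ℝ) r,
      HasDerivWithinAt y (f t + (C t)ᵀ *ᵥ x t) (Set.Icc 0 r) t)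
    (hx0 : x 0 = x₀)
    (Φ : ℝ → Matrix (Fin n) (Fin n) ℝ)
    (hΦ : ∀ t ∈ Set.Icc (0:ℝ) r, HasDerivWithinAt Φ (A t * Φ t) (Set.Icc 0 r) t)
    (hΦ0 : Φ 0 = 1)
    (θ : ℝ → (Fin n → ℝ))
    (hθ : ∀ t ∈ Set.Icc (0:ℝ) r,
      HasDerivWithinAt θ (A t *ᵥ θ t + b t) (Set.Icc 0 r) t)
    (hθ0 : θ 0 = 0)
    (q : ℝ → Matrix (Fin n) (Fin k) ℝ)
    (hqdef : ∀ t, q t = ∫ s in (0:ℝ)..t, (Φ s)ᵀ * C s)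
    (p : ℝ → (Fin k → ℝ))
    (hpdef : ∀ t, p t = y t - y 0 - (∫ s in (0:ℝ)..t, f s)
      - ∫ s in (0:ℝ)..t, (C s)ᵀ *ᵥ θ s) :
    ∀ t ∈ Set.Icc (0:ℝ) r, p t = (q t)ᵀ *ᵥ x₀ := by
  have hsol := Matrix.ODE_affine_solution_sub_eqOn_mulVec hA hx hθ hΦ hΦ0
  rw [hx0, hθ0, sub_zero] at hsol
  intro t ht
  have hsub : Icc 0 t ⊆ Icc 0 r := Icc_subset_Icc_right ht.2
  have hθc : ContinuousOn θ (Icc 0 t) := fun s hs => ((hθ s (hsub hs)).mono hsub).continuousWithinAt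
  have hΦc : ContinuousOn Φ (Icc 0 t) := fun s hs => ((hΦ s (hsub hs)).mono hsub).continuousWithinAt
  have hΦCc : ContinuousOn (fun s => (Φ s)ᵀ * C s) (Icc 0 t) :=
    (continuous_fst.matrix_transpose.matrix_mul continuous_snd).comp_continuousOn
      (hΦc.prodMk (hC.mono hsub))
  have hfi : IntervalIntegrable f volume 0 t := (hf.mono hsub).intervalIntegrable_of_Icc ht.1
  have hCθi : IntervalIntegrable (fun s => (C s)ᵀ *ᵥ θ s) volume 0 t :=
    ((continuous_fst.matrix_transpose.matrix_mulVec continuous_snd).comp_continuousOn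
      ((hC.mono hsub).prodMk hθc)).intervalIntegrable_of_Icc ht.1
  have hx₀ΦCi : IntervalIntegrable (fun s => x₀ ᵥ* ((Φ s)ᵀ * C s)) volume 0 t :=
    ((continuous_const.matrix_vecMul continuous_id).comp_continuousOn hΦCc)
      |>.intervalIntegrable_of_Icc ht.1
  have hy' : ∀ s ∈ Icc 0 t, HasDerivWithinAt y
      (f s + (C s)ᵀ *ᵥ θ s + x₀ ᵥ* ((Φ s)ᵀ * C s)) (Icc 0 t) s := fun s hs =>
    ((hy s (hsub hs)).mono hsub).congr_deriv <| by
      rw [← vecMul_vecMul, vecMul_transpose,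
        ← show x s - θ s = Φ s *ᵥ x₀ from hsol (hsub hs), ← mulVec_transpose, mulVec_sub]
      abel
  rw [hpdef, hqdef, mulVec_transpose, ← integral_vecMul x₀ (hΦCc.intervalIntegrable_of_Icc ht.1),
    ← integral_eq_sub_of_hasDerivWithinAt_Icc ht.1 hy' ((hfi.add hCθi).add hx₀ΦCi),
    integral_add (hfi.add hCθi) hx₀ΦCi, integral_add hfi hCθi]
  abel

/-- Equation (2.5) of Fact I: for all `t ∈ [0, r]`, `p t = (q t)ᵀ *ᵥ x₀`,
i.e. the output-derived quantity `p` is a linear function of the unknown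
initial state `x₀` with coefficient matrix `q t`. -/
theorem stmt_7 (n k : ℕ) (hn : 1 ≤ n) (hk : 1 ≤ k) (r : ℝ) (hr : 0 < r)
    (A : ℝ → Matrix (Fin n) (Fin n) ℝ) (b : ℝ → (Fin n → ℝ))
    (C : ℝ → Matrix (Fin n) (Fin k) ℝ) (f : ℝ → (Fin k → ℝ))
    (hA : ContinuousOn A (Set.Icc 0 r)) (hb : ContinuousOn b (Set.Icc 0 r))
    (hC : ContinuousOn C (Set.Icc 0 r)) (hf : ContinuousOn f (Set.Icc 0 r))
    (x : ℝ → (Fin n → ℝ)) (y : ℝ → (Fin k → ℝ)) (x₀ : Fin n → ℝ)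
    (hx : ∀ t ∈ Set.Icc (0:ℝ) r,
      HasDerivWithinAt x (A t *ᵥ x t + b t) (Set.Icc 0 r) t)
    (hy : ∀ t ∈ Set.Icc (0:ℝ) r,
      HasDerivWithinAt y (f t + (C t)ᵀ *ᵥ x t) (Set.Icc 0 r) t)
    (hx0 : x 0 = x₀)
    (Φ : ℝ → Matrix (Fin n) (Fin n) ℝ)
    (hΦ : ∀ t ∈ Set.Icc (0:ℝ) r, HasDerivWithinAt Φ (A t * Φ t) (Set.Icc 0 r) t)
    (hΦ0 : Φ 0 = 1)
    (θ : ℝ → (Fin n → ℝ))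
    (hθ : ∀ t ∈ Set.Icc (0:ℝ) r,
      HasDerivWithinAt θ (A t *ᵥ θ t + b t) (Set.Icc 0 r) t)
    (hθ0 : θ 0 = 0)
    (q : ℝ → Matrix (Fin n) (Fin k) ℝ)
    (hqdef : ∀ t, q t = ∫ s in (0:ℝ)..t, (Φ s)ᵀ * C s)
    (p : ℝ → (Fin k → ℝ))
    (hpdef : ∀ t, p t = y t - y 0 - (∫ s in (0:ℝ)..t, f s)
      - ∫ s in (0:ℝ)..t, (C s)ᵀ *ᵥ θ s) :
    ∀ t ∈ Set.Icc (0:ℝ) r, p t = (q t)ᵀ *ᵥ x₀ :=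
  stmt_7_general n k r A b C f hA hC hf x y x₀ hx hy hx0 Φ hΦ hΦ0 θ hθ hθ0 q hqdef p hpdef
end

section
/- Suppose there exist times t₀, t₁, …, t_{n-1} ∈ [0, r] such that the n × n matrix whose i-th row is the row vector (C tᵢ)ᵀ *ᵥ applied through Φ tᵢ, i.e. the vector (Φ tᵢ)ᵀ *ᵥ C tᵢ viewed as a row, has nonzero determinant. Then the matrix Q := ∫ t in (0:ℝ)..r, fun i j => q t i * q t j is positive definite and x₀ = Q⁻¹ *ᵥ (∫ t in (0:ℝ)..r, p t • q t). (Corollary 2.5: sufficient determinant condition for exact state reconstruction in the single-output case k = 1.) -/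
/-!
By uniqueness for the linear equation, `x t = Φ t *ᵥ x₀ + θ t` on `[0, r]`. Then `p` and
`fun t => q t ⬝ᵥ x₀` both start at `0` and have derivative `C t ⬝ᵥ (Φ t *ᵥ x₀)`, so they agree,
and `Q *ᵥ x₀ = ∫ (q t ⬝ᵥ x₀) • q t = ∫ p t • q t`. The matrix `Q` is the Gram matrix of `q`, so
`w ⬝ᵥ Q *ᵥ w = ∫ (q t ⬝ᵥ w) ^ 2`, which vanishes only if `q t ⬝ᵥ w = 0` on `[0, r]`.
Differentiating, `((Φ t)ᵀ *ᵥ C t) ⬝ᵥ w = 0` there, in particular at every `ts i`, and the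
determinant condition forces `w = 0`.
-/

open MeasureTheory intervalIntegral Matrix Set

attribute [local instance] Matrix.normedAddCommGroup Matrix.normedSpace

section Continuity

variable {X R ι κ : Type*} [TopologicalSpace X] [TopologicalSpace R] [Fintype κ]
  [NonUnitalNonAssocSemiring R] [ContinuousAdd R] [ContinuousMul R] {s : Set X}

theorem ContinuousOn.dotProduct {u v : X → κ → R} (hu : ContinuousOn u s)
    (hv : ContinuousOn v s) : ContinuousOn (fun x => u x ⬝ᵥ v x) s :=
  (continuous_fst.dotProduct continuous_snd).comp_continuousOn (hu.prodMk hv)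

theorem ContinuousOn.matrix_mulVec {M : X → Matrix ι κ R} {v : X → κ → R}
    (hM : ContinuousOn M s) (hv : ContinuousOn v s) : ContinuousOn (fun x => M x *ᵥ v x) s :=
  (continuous_fst.matrix_mulVec continuous_snd).comp_continuousOn (hM.prodMk hv)

end Continuity

section Derivatives

variable {ι κ : Type*} [Fintype κ] {s : Set ℝ} {t : ℝ}

theorem HasDerivWithinAt.dotProduct {u v : ℝ → κ → ℝ} {u' v' : κ → ℝ}
    (hu : HasDerivWithinAt u u' s t) (hv : HasDerivWithinAt v v' s t) :
    HasDerivWithinAt (fun τ => u τ ⬝ᵥ v τ) (u' ⬝ᵥ v t + u t ⬝ᵥ v') s t := by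
  rw [_root_.dotProduct, _root_.dotProduct, ← Finset.sum_add_distrib]
  exact HasDerivWithinAt.fun_sum fun i _ =>
    (hasDerivWithinAt_pi.1 hu i).fun_mul (hasDerivWithinAt_pi.1 hv i)

theorem HasDerivWithinAt.mulVec [Fintype ι] {M : ℝ → Matrix ι κ ℝ} {v : ℝ → κ → ℝ}
    {M' : Matrix ι κ ℝ} {v' : κ → ℝ}
    (hM : HasDerivWithinAt M M' s t) (hv : HasDerivWithinAt v v' s t) :
    HasDerivWithinAt (fun τ => M τ *ᵥ v τ) (M' *ᵥ v t + M t *ᵥ v') s t :=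
  hasDerivWithinAt_pi.2 fun i => (hasDerivWithinAt_pi.1 hM i).dotProduct hv

end Derivatives

section Calculus

variable {E : Type*} [NormedAddCommGroup E] [NormedSpace ℝ E] {a b : ℝ}

theorem ContinuousOn.hasDerivWithinAt_integral_Icc [CompleteSpace E] {h : ℝ → E} {t : ℝ}
    (hh : ContinuousOn h (Icc a b)) (ht : t ∈ Icc a b) :
    HasDerivWithinAt (fun u => ∫ s in a..u, h s) (h t) (Icc a b) t := by
  have : Fact (t ∈ Icc a b) := ⟨ht⟩
  refine integral_hasDerivWithinAt_right ?_
    (hh.stronglyMeasurableAtFilter_nhdsWithin measurableSet_Icc t) (hh t ht)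
  exact (hh.mono (uIcc_subset_Icc (left_mem_Icc.2 (ht.1.trans ht.2)) ht)).intervalIntegrable

theorem eqOn_Icc_of_hasDerivWithinAt_eq {f g : ℝ → E} {f' : ℝ → E}
    (hf : ∀ t ∈ Icc a b, HasDerivWithinAt f (f' t) (Icc a b) t)
    (hg : ∀ t ∈ Icc a b, HasDerivWithinAt g (f' t) (Icc a b) t) (ha : f a = g a) :
    EqOn f g (Icc a b) :=
  eq_of_has_deriv_right_eq
    (fun t ht => (hf t (Ico_subset_Icc_self ht)).mono_of_mem_nhdsWithin (Icc_mem_nhdsGE_of_mem ht))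
    (fun t ht => (hg t (Ico_subset_Icc_self ht)).mono_of_mem_nhdsWithin (Icc_mem_nhdsGE_of_mem ht))
    (fun t ht => (hf t ht).continuousWithinAt) (fun t ht => (hg t ht).continuousWithinAt) ha

end Calculus

theorem Matrix.norm_mulVec_le {ι κ : Type*} [Fintype ι] [Fintype κ] (M : Matrix ι κ ℝ)
    (v : κ → ℝ) : ‖M *ᵥ v‖ ≤ Fintype.card κ * ‖M‖ * ‖v‖ := by
  refine (pi_norm_le_iff_of_nonneg (by positivity)).2 fun i => ?_
  calc ‖∑ j, M i j * v j‖ ≤ ∑ j, ‖M i j‖ * ‖v j‖ := by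
        simpa only [norm_mul] using norm_sum_le Finset.univ fun j => M i j * v j
    _ ≤ ∑ _j : κ, ‖M‖ * ‖v‖ := Finset.sum_le_sum fun j _ =>
        mul_le_mul M.norm_entry_le_entrywise_sup_norm (norm_le_pi_norm v j)
          (norm_nonneg _) (norm_nonneg _)
    _ = Fintype.card κ * ‖M‖ * ‖v‖ := by simp [mul_assoc]

theorem eqOn_Icc_of_hasDerivWithinAt_mulVec_add {ι : Type*} [Fintype ι]
    {A : ℝ → Matrix ι ι ℝ} {c x z : ℝ → ι → ℝ} {a b : ℝ} (hA : ContinuousOn A (Icc a b))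
    (hx : ∀ t ∈ Icc a b, HasDerivWithinAt x (A t *ᵥ x t + c t) (Icc a b) t)
    (hz : ∀ t ∈ Icc a b, HasDerivWithinAt z (A t *ᵥ z t + c t) (Icc a b) t) (ha : x a = z a) :
    EqOn x z (Icc a b) := by
  obtain ⟨K, hK⟩ := isCompact_Icc.exists_bound_of_continuousOn hA
  have hLip : ∀ t ∈ Ico a b,
      LipschitzOnWith (Fintype.card ι * K).toNNReal (fun w => A t *ᵥ w + c t) univ := by
    refine fun t ht => (LipschitzWith.of_dist_le_mul fun v w => ?_).lipschitzOnWith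
    rw [dist_eq_norm, dist_eq_norm, add_sub_add_right_eq_sub, ← mulVec_sub]
    refine (norm_mulVec_le _ _).trans (mul_le_mul_of_nonneg_right ?_ (norm_nonneg _))
    exact (mul_le_mul_of_nonneg_left (hK t (Ico_subset_Icc_self ht)) (by positivity)).trans
      (Real.le_coe_toNNReal _)
  have hright : ∀ {y : ℝ → ι → ℝ},
      (∀ t ∈ Icc a b, HasDerivWithinAt y (A t *ᵥ y t + c t) (Icc a b) t) →
      ∀ t ∈ Ico a b, HasDerivWithinAt y (A t *ᵥ y t + c t) (Ici t) t := fun hy t ht =>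
    (hy t (Ico_subset_Icc_self ht)).mono_of_mem_nhdsWithin (Icc_mem_nhdsGE_of_mem ht)
  exact ODE_solution_unique_of_mem_Icc_right hLip (fun t ht => (hx t ht).continuousWithinAt)
    (hright hx) (fun _ _ => trivial) (fun t ht => (hz t ht).continuousWithinAt) (hright hz)
    (fun _ _ => trivial) ha

section Gram

variable {ι : Type*} {q : ℝ → ι → ℝ} {a b : ℝ}

theorem ContinuousOn.vecMulVec_self {s : Set ℝ} (hq : ContinuousOn q s) :
    ContinuousOn (fun t => vecMulVec (q t) (q t)) s :=
  (continuous_id.matrix_vecMulVec continuous_id).comp_continuousOn hq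

variable [Fintype ι]

theorem intervalIntegral_vecMulVec_mulVec (hq : ContinuousOn q (uIcc a b)) (w : ι → ℝ) :
    (∫ t in a..b, vecMulVec (q t) (q t)) *ᵥ w = ∫ t in a..b, (q t ⬝ᵥ w) • q t := by
  have h := ((mulVecBilin ℝ ℝ).flip w).toContinuousLinearMap.intervalIntegral_comp_comm
    (hq.vecMulVec_self.intervalIntegrable (μ := volume))
  change ∫ t in a..b, vecMulVec (q t) (q t) *ᵥ w = (∫ t in a..b, vecMulVec (q t) (q t)) *ᵥ w at h
  simp [← h, vecMulVec_mulVec]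

theorem dotProduct_intervalIntegral_vecMulVec_mulVec (hq : ContinuousOn q (uIcc a b))
    (w : ι → ℝ) :
    w ⬝ᵥ ((∫ t in a..b, vecMulVec (q t) (q t)) *ᵥ w) = ∫ t in a..b, (q t ⬝ᵥ w) ^ 2 := by
  rw [intervalIntegral_vecMulVec_mulVec hq]
  simpa [dotProduct_comm w, sq] using
    ((dotProductBilin ℝ ℝ w).toContinuousLinearMap.intervalIntegral_comp_comm
      (((hq.dotProduct continuousOn_const).smul hq).intervalIntegrable (μ := volume))).symm

theorem isHermitian_intervalIntegral_vecMulVec (hq : ContinuousOn q (uIcc a b)) :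
    (∫ t in a..b, vecMulVec (q t) (q t)).IsHermitian := by
  rw [IsHermitian, conjTranspose_eq_transpose_of_trivial]
  have h :=
    (transposeLinearEquiv ι ι ℝ ℝ).toLinearMap.toContinuousLinearMap.intervalIntegral_comp_comm
      (hq.vecMulVec_self.intervalIntegrable (μ := volume))
  change ∫ t in a..b, (vecMulVec (q t) (q t))ᵀ = (∫ t in a..b, vecMulVec (q t) (q t))ᵀ at h
  simp [← h, transpose_vecMulVec]

theorem posDef_intervalIntegral_vecMulVec (hab : a < b) (hq : ContinuousOn q (Icc a b))
    (hspan : ∀ w, (∀ t ∈ Icc a b, q t ⬝ᵥ w = 0) → w = 0) :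
    (∫ t in a..b, vecMulVec (q t) (q t)).PosDef := by
  have hq' : ContinuousOn q (uIcc a b) := by rwa [uIcc_of_le hab.le]
  refine .of_dotProduct_mulVec_pos (isHermitian_intervalIntegral_vecMulVec hq') fun w hw => ?_
  obtain ⟨t, ht, hqt⟩ : ∃ t ∈ Icc a b, q t ⬝ᵥ w ≠ 0 := by
    by_contra! h
    exact hw (hspan w h)
  rw [star_trivial, dotProduct_intervalIntegral_vecMulVec_mulVec hq']
  exact intervalIntegral.integral_pos hab ((hq.dotProduct continuousOn_const).pow 2)
    (fun _ _ => sq_nonneg _) ⟨t, ht, by positivity⟩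

end Gram

section Observability

variable {ι : Type*} [Fintype ι] {a b : ℝ}

theorem dotProduct_eq_zero_of_intervalIntegral_dotProduct_eq_zero {g : ℝ → ι → ℝ} {w : ι → ℝ}
    (hab : a < b) (hg : ContinuousOn g (Icc a b))
    (h : ∀ t ∈ Icc a b, (∫ s in a..t, g s) ⬝ᵥ w = 0) : ∀ t ∈ Icc a b, g t ⬝ᵥ w = 0 := by
  intro t ht
  have hderiv := (hg.hasDerivWithinAt_integral_Icc ht).dotProduct (hasDerivWithinAt_const t _ w)
  have hzero : HasDerivWithinAt (fun u => (∫ s in a..u, g s) ⬝ᵥ w) 0 (Icc a b) t :=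
    (hasDerivWithinAt_const t _ 0).congr h (h t ht)
  simpa using (uniqueDiffOn_Icc hab t ht).eq_deriv _ hderiv hzero

theorem output_sub_integrals_eq_dotProduct {C θ x : ℝ → ι → ℝ} {Φ : ℝ → Matrix ι ι ℝ}
    {f y : ℝ → ℝ} {x₀ : ι → ℝ} (hC : ContinuousOn C (Icc a b)) (hf : ContinuousOn f (Icc a b))
    (hΦ : ContinuousOn Φ (Icc a b)) (hθ : ContinuousOn θ (Icc a b))
    (hy : ∀ t ∈ Icc a b, HasDerivWithinAt y (f t + C t ⬝ᵥ x t) (Icc a b) t)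
    (hx : EqOn x (fun t => Φ t *ᵥ x₀ + θ t) (Icc a b)) :
    EqOn (fun t => y t - y a - (∫ s in a..t, f s) - ∫ s in a..t, C s ⬝ᵥ θ s)
      (fun t => (∫ s in a..t, (Φ s)ᵀ *ᵥ C s) ⬝ᵥ x₀) (Icc a b) := by
  have hg : ContinuousOn (fun s => (Φ s)ᵀ *ᵥ C s) (Icc a b) :=
    (continuous_id.matrix_transpose.comp_continuousOn hΦ).matrix_mulVec hC
  refine eqOn_Icc_of_hasDerivWithinAt_eq (f' := fun t => C t ⬝ᵥ (Φ t *ᵥ x₀))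
    (fun t ht => ?_) (fun t ht => ?_) (by simp)
  · refine ((((hy t ht).sub_const (y a)).sub (hf.hasDerivWithinAt_integral_Icc ht)).sub
      ((hC.dotProduct hθ).hasDerivWithinAt_integral_Icc ht)).congr_deriv ?_
    rw [hx ht, dotProduct_add]
    ring
  · refine ((hg.hasDerivWithinAt_integral_Icc ht).dotProduct
      (hasDerivWithinAt_const t _ x₀)).congr_deriv ?_
    rw [dotProduct_zero, add_zero, mulVec_transpose, dotProduct_mulVec]

end Observability

theorem stmt_9_general (n : ℕ) (r : ℝ) (hr : 0 < r)
    (A : ℝ → Matrix (Fin n) (Fin n) ℝ) (b : ℝ → (Fin n → ℝ))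
    (C : ℝ → (Fin n → ℝ)) (f : ℝ → ℝ)
    (hA : ContinuousOn A (Set.Icc 0 r))
    (hC : ContinuousOn C (Set.Icc 0 r)) (hf : ContinuousOn f (Set.Icc 0 r))
    (x : ℝ → (Fin n → ℝ)) (y : ℝ → ℝ) (x₀ : Fin n → ℝ)
    (hx : ∀ t ∈ Set.Icc (0:ℝ) r,
      HasDerivWithinAt x (A t *ᵥ x t + b t) (Set.Icc 0 r) t)
    (hy : ∀ t ∈ Set.Icc (0:ℝ) r,
      HasDerivWithinAt y (f t + C t ⬝ᵥ x t) (Set.Icc 0 r) t)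
    (hx0 : x 0 = x₀)
    (Φ : ℝ → Matrix (Fin n) (Fin n) ℝ)
    (hΦ : ∀ t ∈ Set.Icc (0:ℝ) r, HasDerivWithinAt Φ (A t * Φ t) (Set.Icc 0 r) t)
    (hΦ0 : Φ 0 = 1)
    (θ : ℝ → (Fin n → ℝ))
    (hθ : ∀ t ∈ Set.Icc (0:ℝ) r,
      HasDerivWithinAt θ (A t *ᵥ θ t + b t) (Set.Icc 0 r) t)
    (hθ0 : θ 0 = 0)
    (q : ℝ → (Fin n → ℝ))
    (hqdef : ∀ t, q t = ∫ s in (0:ℝ)..t, (Φ s)ᵀ *ᵥ C s)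
    (p : ℝ → ℝ)
    (hpdef : ∀ t, p t = y t - y 0 - (∫ s in (0:ℝ)..t, f s)
      - ∫ s in (0:ℝ)..t, C s ⬝ᵥ θ s)
    (Q : Matrix (Fin n) (Fin n) ℝ)
    (hQ : Q = ∫ t in (0:ℝ)..r, (Matrix.of fun i j => q t i * q t j))
    (ts : Fin n → ℝ) (hts : ∀ i, ts i ∈ Set.Icc (0:ℝ) r)
    (hdet : (Matrix.of fun i j => ((Φ (ts i))ᵀ *ᵥ C (ts i)) j).det ≠ 0) :
    Q.PosDef ∧ x₀ = Q⁻¹ *ᵥ (∫ t in (0:ℝ)..r, p t • q t) := by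
  have hΦc : ContinuousOn Φ (Icc 0 r) := fun t ht => (hΦ t ht).continuousWithinAt
  have hθc : ContinuousOn θ (Icc 0 r) := fun t ht => (hθ t ht).continuousWithinAt
  have hg : ContinuousOn (fun s => (Φ s)ᵀ *ᵥ C s) (Icc 0 r) :=
    (continuous_id.matrix_transpose.comp_continuousOn hΦc).matrix_mulVec hC
  have hsol : EqOn x (fun t => Φ t *ᵥ x₀ + θ t) (Icc 0 r) := by
    refine eqOn_Icc_of_hasDerivWithinAt_mulVec_add hA hx (fun t ht => ?_) (by simp [hx0, hΦ0, hθ0])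
    refine (((hΦ t ht).mulVec (hasDerivWithinAt_const t _ x₀)).add (hθ t ht)).congr_deriv ?_
    rw [mulVec_zero, add_zero, mulVec_add, mulVec_mulVec, add_assoc]
  have hpq : ∀ t ∈ Icc 0 r, p t = q t ⬝ᵥ x₀ := fun t ht => by
    rw [hpdef, hqdef]
    exact output_sub_integrals_eq_dotProduct hC hf hΦc hθc hy hsol ht
  have hq : ContinuousOn q (Icc 0 r) := by
    rw [funext hqdef]
    exact fun t ht => (hg.hasDerivWithinAt_integral_Icc ht).continuousWithinAt
  have hspan : ∀ w, (∀ t ∈ Icc 0 r, q t ⬝ᵥ w = 0) → w = 0 := fun w hw =>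
    eq_zero_of_mulVec_eq_zero hdet <| funext fun i =>
      dotProduct_eq_zero_of_intervalIntegral_dotProduct_eq_zero hr hg
        (fun t ht => hqdef t ▸ hw t ht) (ts i) (hts i)
  have hQ' : Q = ∫ t in (0:ℝ)..r, vecMulVec (q t) (q t) := hQ
  have hQpos : Q.PosDef := hQ' ▸ posDef_intervalIntegral_vecMulVec hr hq hspan
  have hQx : Q *ᵥ x₀ = ∫ t in (0:ℝ)..r, p t • q t := by
    rw [hQ', intervalIntegral_vecMulVec_mulVec (by rwa [uIcc_of_le hr.le])]
    refine integral_congr fun t ht => ?_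
    rw [hpq t (uIcc_of_le hr.le ▸ ht)]
  refine ⟨hQpos, ?_⟩
  rw [← hQx, mulVec_mulVec, nonsing_inv_mul _ (Q.isUnit_iff_isUnit_det.1 hQpos.isUnit), one_mulVec]

/-- Corollary 2.5 (single-output case `k = 1`): if there are times
`ts 0, …, ts (n-1) ∈ [0, r]` such that the `n × n` matrix whose `i`-th row is
the vector `(Φ (ts i))ᵀ *ᵥ C (ts i)` has nonzero determinant, then the matrix
`Q = ∫ t in 0..r, (fun i j => q t i * q t j)` is positive definite and
`x₀ = Q⁻¹ *ᵥ ∫ t in 0..r, p t • q t`. -/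
theorem stmt_9 (n : ℕ) (hn : 1 ≤ n) (r : ℝ) (hr : 0 < r)
    (A : ℝ → Matrix (Fin n) (Fin n) ℝ) (b : ℝ → (Fin n → ℝ))
    (C : ℝ → (Fin n → ℝ)) (f : ℝ → ℝ)
    (hA : ContinuousOn A (Set.Icc 0 r)) (hb : ContinuousOn b (Set.Icc 0 r))
    (hC : ContinuousOn C (Set.Icc 0 r)) (hf : ContinuousOn f (Set.Icc 0 r))
    (x : ℝ → (Fin n → ℝ)) (y : ℝ → ℝ) (x₀ : Fin n → ℝ)
    (hx : ∀ t ∈ Set.Icc (0:ℝ) r,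
      HasDerivWithinAt x (A t *ᵥ x t + b t) (Set.Icc 0 r) t)
    (hy : ∀ t ∈ Set.Icc (0:ℝ) r,
      HasDerivWithinAt y (f t + C t ⬝ᵥ x t) (Set.Icc 0 r) t)
    (hx0 : x 0 = x₀)
    (Φ : ℝ → Matrix (Fin n) (Fin n) ℝ)
    (hΦ : ∀ t ∈ Set.Icc (0:ℝ) r, HasDerivWithinAt Φ (A t * Φ t) (Set.Icc 0 r) t)
    (hΦ0 : Φ 0 = 1)
    (θ : ℝ → (Fin n → ℝ))
    (hθ : ∀ t ∈ Set.Icc (0:ℝ) r,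
      HasDerivWithinAt θ (A t *ᵥ θ t + b t) (Set.Icc 0 r) t)
    (hθ0 : θ 0 = 0)
    (q : ℝ → (Fin n → ℝ))
    (hqdef : ∀ t, q t = ∫ s in (0:ℝ)..t, (Φ s)ᵀ *ᵥ C s)
    (p : ℝ → ℝ)
    (hpdef : ∀ t, p t = y t - y 0 - (∫ s in (0:ℝ)..t, f s)
      - ∫ s in (0:ℝ)..t, C s ⬝ᵥ θ s)
    (Q : Matrix (Fin n) (Fin n) ℝ)
    (hQ : Q = ∫ t in (0:ℝ)..r, (Matrix.of fun i j => q t i * q t j))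
    (ts : Fin n → ℝ) (hts : ∀ i, ts i ∈ Set.Icc (0:ℝ) r)
    (hdet : (Matrix.of fun i j => ((Φ (ts i))ᵀ *ᵥ C (ts i)) j).det ≠ 0) :
    Q.PosDef ∧ x₀ = Q⁻¹ *ᵥ (∫ t in (0:ℝ)..r, p t • q t) :=
  stmt_9_general n r hr A b C f hA hC hf x y x₀ hx hy hx0 Φ hΦ hΦ0 θ hθ hθ0 q hqdef p hpdef Q hQ ts
    hts hdet
end

section
/- If c₂ (y 0) * c₁ (y t) * Real.exp (∫ s in (0:ℝ)..t, (a₁ (y s) - a₂ (y s))) = c₁ (y 0) * c₂ (y t) for all t ∈ [0, r], then κ (y t) * y' t + a₁ (y t) - a₂ (y t) = 0 for all t ∈ [0, r], where κ z := c₁' z / c₁ z - c₂' z / c₂ z is the logarithmic-derivative difference d/dz (ln (c₁ z / c₂ z)). (Implication (2.17) ⇒ (2.18) in Example 2.6.) -/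
open MeasureTheory intervalIntegral

/-! Taking logarithms, the hypothesis says that
`u ↦ log c₁ (y u) - log c₂ (y u) + ∫ s in 0..u, (a₁ (y s) - a₂ (y s))` is constant on `[0, r]`.
By the chain rule and the fundamental theorem of calculus its derivative within `[0, r]` is
`κ (y t) * y' t + a₁ (y t) - a₂ (y t)`, which must therefore vanish, since one-sided
derivatives on a nondegenerate interval are unique. -/

theorem HasDerivWithinAt.eq_zero_of_forall_mem_eq_const {𝕜 F : Type*} [NontriviallyNormedField 𝕜]
    [NormedAddCommGroup F] [NormedSpace 𝕜 F] {f : 𝕜 → F} {f' c : F} {s : Set 𝕜} {x : 𝕜}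
    (h : HasDerivWithinAt f f' s x) (hs : UniqueDiffWithinAt 𝕜 s x) (hx : x ∈ s)
    (hc : ∀ y ∈ s, f y = c) : f' = 0 :=
  hs.eq_deriv _ h ((hasDerivWithinAt_const x s c).congr_of_mem hc hx)

theorem ContinuousOn.hasDerivWithinAt_integral_Icc_s11 {E : Type*} [NormedAddCommGroup E]
    [NormedSpace ℝ E] [CompleteSpace E] {f : ℝ → E} {a b u : ℝ}
    (hf : ContinuousOn f (Set.Icc a b)) (hu : u ∈ Set.Icc a b) :
    HasDerivWithinAt (fun u => ∫ x in a..u, f x) (f u) (Set.Icc a b) u := by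
  have : Fact (u ∈ Set.Icc a b) := ⟨hu⟩
  have hint : IntervalIntegrable f volume a u := by
    refine (hf.mono ?_).intervalIntegrable
    rw [Set.uIcc_of_le hu.1]
    exact Set.Icc_subset_Icc le_rfl hu.2
  exact integral_hasDerivWithinAt_right hint
    (hf.stronglyMeasurableAtFilter_nhdsWithin measurableSet_Icc u) (hf u hu)

theorem Real.log_sub_log_add_eq_of_mul_mul_exp_eq {p q p' q' I : ℝ} (hp : 0 < p) (hq : 0 < q)
    (hp' : 0 < p') (hq' : 0 < q') (h : p * q * Real.exp I = p' * q') :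
    Real.log q - Real.log q' + I = Real.log p' - Real.log p := by
  have hlog := congrArg Real.log h
  rw [Real.log_mul (mul_pos hp hq).ne' (Real.exp_pos I).ne', Real.log_mul hp.ne' hq.ne',
    Real.log_exp, Real.log_mul hp'.ne' hq'.ne'] at hlog
  linarith

theorem stmt_11_general (r : ℝ) (hr : 0 < r)
    (c₁ c₂ c₁' c₂' : ℝ → ℝ)
    (hc₁ : ∀ z, HasDerivAt c₁ (c₁' z) z) (hc₂ : ∀ z, HasDerivAt c₂ (c₂' z) z)
    (hc₁pos : ∀ z, 0 < c₁ z) (hc₂pos : ∀ z, 0 < c₂ z)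
    (a₁ a₂ : ℝ → ℝ) (ha₁ : Continuous a₁) (ha₂ : Continuous a₂)
    (y y' : ℝ → ℝ)
    (hy : ∀ t ∈ Set.Icc (0:ℝ) r, HasDerivWithinAt y (y' t) (Set.Icc 0 r) t)
    (κ : ℝ → ℝ) (hκ : ∀ z, κ z = c₁' z / c₁ z - c₂' z / c₂ z)
    (hid : ∀ t ∈ Set.Icc (0:ℝ) r,
      c₂ (y 0) * c₁ (y t) * Real.exp (∫ s in (0:ℝ)..t, (a₁ (y s) - a₂ (y s))) =
        c₁ (y 0) * c₂ (y t)) :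
    ∀ t ∈ Set.Icc (0:ℝ) r, κ (y t) * y' t + a₁ (y t) - a₂ (y t) = 0 := by
  intro t ht
  have hyc : ContinuousOn y (Set.Icc 0 r) := fun s hs => (hy s hs).continuousWithinAt
  have hderiv : HasDerivWithinAt
      (fun u => Real.log (c₁ (y u)) - Real.log (c₂ (y u)) +
        ∫ s in (0:ℝ)..u, (a₁ (y s) - a₂ (y s)))
      (c₁' (y t) * y' t / c₁ (y t) - c₂' (y t) * y' t / c₂ (y t) + (a₁ (y t) - a₂ (y t)))
      (Set.Icc 0 r) t :=
    ((((hc₁ _).comp_hasDerivWithinAt t (hy t ht)).log (hc₁pos _).ne').sub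
      (((hc₂ _).comp_hasDerivWithinAt t (hy t ht)).log (hc₂pos _).ne')).add
      (((ha₁.comp_continuousOn hyc).sub (ha₂.comp_continuousOn hyc)).hasDerivWithinAt_integral_Icc_s11
        ht)
  have hzero := hderiv.eq_zero_of_forall_mem_eq_const (uniqueDiffOn_Icc hr t ht) ht
    fun u hu => Real.log_sub_log_add_eq_of_mul_mul_exp_eq (hc₂pos _) (hc₁pos _) (hc₁pos _)
      (hc₂pos _) (hid u hu)
  rw [hκ]
  linear_combination hzero

/-- Implication (2.17) ⇒ (2.18) in Example 2.6: if
`c₂ (y 0) * c₁ (y t) * exp (∫ s in 0..t, a₁ (y s) - a₂ (y s)) = c₁ (y 0) * c₂ (y t)`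
for all `t ∈ [0, r]`, then `κ (y t) * y' t + a₁ (y t) - a₂ (y t) = 0` for all
`t ∈ [0, r]`, where `κ z = c₁' z / c₁ z - c₂' z / c₂ z = (ln (c₁ / c₂))' z`. -/
theorem stmt_11 (r : ℝ) (hr : 0 < r)
    (c₁ c₂ c₁' c₂' : ℝ → ℝ)
    (hc₁ : ∀ z, HasDerivAt c₁ (c₁' z) z) (hc₂ : ∀ z, HasDerivAt c₂ (c₂' z) z)
    (hc₁' : Continuous c₁') (hc₂' : Continuous c₂')
    (hc₁pos : ∀ z, 0 < c₁ z) (hc₂pos : ∀ z, 0 < c₂ z)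
    (a₁ a₂ : ℝ → ℝ) (ha₁ : Continuous a₁) (ha₂ : Continuous a₂)
    (y y' : ℝ → ℝ)
    (hy : ∀ t ∈ Set.Icc (0:ℝ) r, HasDerivWithinAt y (y' t) (Set.Icc 0 r) t)
    (κ : ℝ → ℝ) (hκ : ∀ z, κ z = c₁' z / c₁ z - c₂' z / c₂ z)
    (hid : ∀ t ∈ Set.Icc (0:ℝ) r,
      c₂ (y 0) * c₁ (y t) * Real.exp (∫ s in (0:ℝ)..t, (a₁ (y s) - a₂ (y s))) =
        c₁ (y 0) * c₂ (y t)) :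
    ∀ t ∈ Set.Icc (0:ℝ) r, κ (y t) * y' t + a₁ (y t) - a₂ (y t) = 0 :=
  stmt_11_general r hr c₁ c₂ c₁' c₂' hc₁ hc₂ hc₁pos hc₂pos a₁ a₂ ha₁ ha₂ y y' hy κ hκ hid
end

section
/- Assume 0 < Tmin ≤ Ts, (J₁ * k₁ * ĉ₁ + J₂ * k₂ * ĉ₂) / h + Ts ≤ Tmax, and: (k₁ / k₂) * ĉ₁ < ĉ₂ in case E₁ ≥ E₂, while (k₁ / k₂) * Real.exp ((E₂ - E₁) / Tmin) * ĉ₁ < ĉ₂ in case E₁ < E₂. If cA, cB, T : ℝ → ℝ are differentiable on [0, τ] (τ > 0), satisfy the batch reactor equations on [0, τ], and (cA 0, cB 0, T 0) ∈ (0, ĉ₁) × (0, ĉ₂) × (Tmin, Tmax), then (cA t, cB t, T t) ∈ (0, ĉ₁) × (0, ĉ₂) × (Tmin, Tmax) for all t ∈ [0, τ]. (Positive invariance of the region D × Ω for the batch reactor, asserted in Application 1.) -/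
/-!
Let `c` be the first time the trajectory leaves the open box. On `[0, c)` the quantities `cA`,
`cB` and `T - Tmin` satisfy `f' ≥ -κ f` for a constant `κ`, so `e^{κ t} f` is nondecreasing and
they are still positive at `c`. On each upper face the vector field points strictly inward: for
`cA` trivially, for `T` by the choice of `Tmax`, and for `cB` because the case hypotheses give
`k₁ e^{-E₁/T} ĉ₁ < k₂ e^{-E₂/T} ĉ₂` for every `T ≥ Tmin`. A function that stays below a level
on `[0, c)` cannot reach it at `c` with a negative left derivative, so the trajectory is still
in the box at `c`, contradicting the choice of `c`.
-/

open Set Real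

theorem ContinuousOn.mapsTo_Icc_of_first_exit {X : Type*} [TopologicalSpace X] {f : ℝ → X}
    {U : Set X} {a b : ℝ} (hf : ContinuousOn f (Icc a b)) (hU : IsOpen U) (ha : f a ∈ U)
    (hexit : ∀ c ∈ Ioc a b, MapsTo f (Ico a c) U → f c ∈ U) : MapsTo f (Icc a b) U := by
  intro t ht
  by_contra hbad
  set S := Icc a b ∩ f ⁻¹' Uᶜ
  have hS : IsClosed S := hf.preimage_isClosed_of_isClosed isClosed_Icc hU.isClosed_compl
  have hbdd : BddBelow S := ⟨a, fun s hs => hs.1.1⟩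
  obtain ⟨⟨has, hsb⟩, hs⟩ : sInf S ∈ S := hS.csInf_mem ⟨t, ht, hbad⟩ hbdd
  have hfirst : MapsTo f (Ico a (sInf S)) U := fun u hu => by
    by_contra hbad'
    exact (csInf_le hbdd ⟨⟨hu.1, hu.2.le.trans hsb⟩, hbad'⟩).not_gt hu.2
  have has' : a < sInf S := has.lt_of_ne (by rintro h; exact hs (h ▸ ha))
  exact hs (hexit _ ⟨has', hsb⟩ hfirst)

theorem IsMaxOn.nonneg_of_hasDerivWithinAt_Icc {f : ℝ → ℝ} {a b d : ℝ} (hab : a < b)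
    (hmax : IsMaxOn f (Icc a b) b) (hf : HasDerivWithinAt f d (Icc a b) b) : 0 ≤ d := by
  have hcone : a - b ∈ posTangentConeAt (Icc a b) b :=
    sub_mem_posTangentConeAt_of_segment_subset
      ((convex_Icc a b).segment_subset (right_mem_Icc.2 hab.le) (left_mem_Icc.2 hab.le))
  have := hmax.localize.hasFDerivWithinAt_nonpos hf.hasFDerivWithinAt hcone
  simp only [ContinuousLinearMap.toSpanSingleton_apply, smul_eq_mul] at this
  nlinarith [sub_neg.2 hab]

theorem lt_of_forall_Ico_lt_of_hasDerivWithinAt {f : ℝ → ℝ} {a b d M : ℝ} (hab : a < b)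
    (hf : HasDerivWithinAt f d (Icc a b) b) (hlt : ∀ t ∈ Ico a b, f t < M)
    (hd : M ≤ f b → d < 0) : f b < M := by
  by_contra! hM
  have hmax : IsMaxOn f (Icc a b) b := isMaxOn_iff.2 fun t ht => by
    rcases eq_or_lt_of_le ht.2 with rfl | htb
    · exact le_rfl
    · exact (hlt t ⟨ht.1, htb⟩).le.trans hM
  exact (hd hM).not_ge (hmax.nonneg_of_hasDerivWithinAt_Icc hab hf)

theorem pos_of_neg_mul_le_deriv {f f' : ℝ → ℝ} {a b c : ℝ} (hab : a ≤ b)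
    (hf : ∀ t ∈ Icc a b, HasDerivWithinAt f (f' t) (Icc a b) t)
    (hf' : ∀ t ∈ Ioo a b, -(c * f t) ≤ f' t) (ha : 0 < f a) : 0 < f b := by
  have hg : ∀ t ∈ Icc a b, HasDerivWithinAt (fun t => exp (c * t) * f t)
      (exp (c * t) * (f' t + c * f t)) (Icc a b) t := fun t ht => by
    have hexp := ((hasDerivAt_id' t).const_mul c).exp.hasDerivWithinAt (s := Icc a b)
    exact (hexp.mul (hf t ht)).congr_deriv (by ring)
  have hmono : MonotoneOn (fun t => exp (c * t) * f t) (Icc a b) := by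
    refine monotoneOn_of_hasDerivWithinAt_nonneg (f' := fun t => exp (c * t) * (f' t + c * f t))
      (convex_Icc a b) (fun t ht => (hg t ht).continuousWithinAt) (fun t ht => ?_) (fun t ht => ?_)
    · rw [interior_Icc] at ht ⊢
      exact (hg t (Ioo_subset_Icc_self ht)).mono Ioo_subset_Icc_self
    · rw [interior_Icc] at ht
      exact mul_nonneg (exp_pos _).le (by linarith [hf' t ht])
  have := hmono (left_mem_Icc.2 hab) (right_mem_Icc.2 hab) hab
  exact pos_of_mul_pos_right ((mul_pos (exp_pos _) ha).trans_le this) (exp_pos _).le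

theorem exp_neg_div_le_one {E T : ℝ} (hE : 0 ≤ E) (hT : 0 ≤ T) : exp (-E / T) ≤ 1 :=
  exp_le_one_iff.2 (div_nonpos_of_nonpos_of_nonneg (neg_nonpos.2 hE) hT)

section BatchReactor

variable {J₁ J₂ k₁ k₂ h E₁ E₂ Ts chat₁ chat₂ Tmin Tmax T c : ℝ} {cA cB θ : ℝ → ℝ}

theorem arrhenius_mul_lt (hk₁ : 0 ≤ k₁) (hk₂ : 0 < k₂) (hchat₁ : 0 ≤ chat₁) (hTmin : 0 < Tmin)
    (hT : Tmin ≤ T)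
    (hcase1 : E₂ ≤ E₁ → (k₁ / k₂) * chat₁ < chat₂)
    (hcase2 : E₁ < E₂ → (k₁ / k₂) * exp ((E₂ - E₁) / Tmin) * chat₁ < chat₂) :
    k₁ * exp (-E₁ / T) * chat₁ < k₂ * exp (-E₂ / T) * chat₂ := by
  have hkc : 0 ≤ k₁ / k₂ * chat₁ := by positivity
  have hratio : k₁ / k₂ * exp ((E₂ - E₁) / T) * chat₁ < chat₂ := by
    rcases le_or_gt E₂ E₁ with hE | hE
    · have hexp : exp ((E₂ - E₁) / T) ≤ 1 :=
        exp_le_one_iff.2 (div_nonpos_of_nonpos_of_nonneg (by linarith) (hTmin.trans_le hT).le)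
      nlinarith [hcase1 hE]
    · have hexp : exp ((E₂ - E₁) / T) ≤ exp ((E₂ - E₁) / Tmin) :=
        exp_le_exp.2 (div_le_div_of_nonneg_left (by linarith) hTmin hT)
      nlinarith [hcase2 hE]
  calc k₁ * exp (-E₁ / T) * chat₁
      = k₂ * exp (-E₂ / T) * (k₁ / k₂ * exp ((E₂ - E₁) / T) * chat₁) := by
        rw [show -E₁ / T = -E₂ / T + (E₂ - E₁) / T by ring, exp_add]
        field_simp
    _ < k₂ * exp (-E₂ / T) * chat₂ := mul_lt_mul_of_pos_left hratio (by positivity)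

theorem reactor_heat_rate_neg {a b : ℝ} (hJ₁ : 0 < J₁) (hJ₂ : 0 ≤ J₂) (hk₁ : 0 < k₁)
    (hk₂ : 0 ≤ k₂) (hh : 0 < h) (hE₁ : 0 ≤ E₁) (hE₂ : 0 ≤ E₂)
    (hTmax : (J₁ * k₁ * chat₁ + J₂ * k₂ * chat₂) / h + Ts ≤ Tmax) (hTmaxT : Tmax ≤ T)
    (hT : 0 ≤ T) (ha : 0 ≤ a) (hachat : a < chat₁) (hb : 0 ≤ b) (hbchat : b ≤ chat₂) :
    J₁ * k₁ * exp (-E₁ / T) * a + J₂ * k₂ * exp (-E₂ / T) * b + h * (Ts - T) < 0 := by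
  have hfeed : J₁ * k₁ * chat₁ + J₂ * k₂ * chat₂ ≤ h * (Tmax - Ts) := by
    rw [← div_le_iff₀' hh]; linarith
  have h₁ : J₁ * k₁ * exp (-E₁ / T) * a < J₁ * k₁ * chat₁ := by
    have : exp (-E₁ / T) * a < chat₁ :=
      (mul_le_of_le_one_left ha (exp_neg_div_le_one hE₁ hT)).trans_lt hachat
    rw [mul_assoc]; exact mul_lt_mul_of_pos_left this (by positivity)
  have h₂ : J₂ * k₂ * exp (-E₂ / T) * b ≤ J₂ * k₂ * chat₂ := by
    have : exp (-E₂ / T) * b ≤ chat₂ :=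
      (mul_le_of_le_one_left hb (exp_neg_div_le_one hE₂ hT)).trans hbchat
    rw [mul_assoc]; exact mul_le_mul_of_nonneg_left this (by positivity)
  nlinarith

def IsBatchReactorSolution (J₁ J₂ k₁ k₂ h E₁ E₂ Ts : ℝ) (s : Set ℝ) (cA cB θ : ℝ → ℝ) : Prop :=
  ∀ t ∈ s,
    HasDerivWithinAt cA (-(k₁ * exp (-E₁ / θ t)) * cA t) s t ∧
    HasDerivWithinAt cB (k₁ * exp (-E₁ / θ t) * cA t - k₂ * exp (-E₂ / θ t) * cB t) s t ∧
    HasDerivWithinAt θ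
      (J₁ * k₁ * exp (-E₁ / θ t) * cA t + J₂ * k₂ * exp (-E₂ / θ t) * cB t + h * (Ts - θ t)) s t

namespace IsBatchReactorSolution

variable {s s' : Set ℝ}

theorem mono (hsol : IsBatchReactorSolution J₁ J₂ k₁ k₂ h E₁ E₂ Ts s cA cB θ) (hs : s' ⊆ s) :
    IsBatchReactorSolution J₁ J₂ k₁ k₂ h E₁ E₂ Ts s' cA cB θ := fun t ht =>
  have ⟨hA, hB, hθ⟩ := hsol t (hs ht)
  ⟨hA.mono hs, hB.mono hs, hθ.mono hs⟩

theorem continuousOn (hsol : IsBatchReactorSolution J₁ J₂ k₁ k₂ h E₁ E₂ Ts s cA cB θ) :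
    ContinuousOn (fun t => (cA t, cB t, θ t)) s := fun t ht =>
  have ⟨hA, hB, hθ⟩ := hsol t ht
  hA.continuousWithinAt.prodMk (hB.continuousWithinAt.prodMk hθ.continuousWithinAt)

theorem lower_bounds (hsol : IsBatchReactorSolution J₁ J₂ k₁ k₂ h E₁ E₂ Ts (Icc 0 c) cA cB θ)
    (hc : 0 < c) (hJ₁ : 0 ≤ J₁) (hJ₂ : 0 ≤ J₂) (hk₁ : 0 ≤ k₁) (hk₂ : 0 ≤ k₂) (hh : 0 ≤ h)
    (hE₁ : 0 ≤ E₁) (hE₂ : 0 ≤ E₂) (hTmin : 0 ≤ Tmin) (hTminTs : Tmin ≤ Ts)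
    (hlow : ∀ t ∈ Ico 0 c, 0 < cA t ∧ 0 < cB t ∧ Tmin < θ t) :
    0 < cA c ∧ 0 < cB c ∧ Tmin < θ c := by
  have h0 := hlow 0 ⟨le_rfl, hc⟩
  have hIoo : ∀ t ∈ Ioo 0 c, 0 < cA t ∧ 0 < cB t ∧ Tmin < θ t :=
    fun t ht => hlow t (Ioo_subset_Ico_self ht)
  refine ⟨?_, ?_, ?_⟩
  · refine pos_of_neg_mul_le_deriv (c := k₁) hc.le (fun t ht => (hsol t ht).1) (fun t ht => ?_) h0.1
    obtain ⟨hA, -, hθ⟩ := hIoo t ht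
    have := exp_neg_div_le_one hE₁ (hTmin.trans hθ.le)
    nlinarith [mul_nonneg hk₁ hA.le]
  · refine pos_of_neg_mul_le_deriv (c := k₂) hc.le (fun t ht => (hsol t ht).2.1)
      (fun t ht => ?_) h0.2.1
    obtain ⟨hA, hB, hθ⟩ := hIoo t ht
    have := exp_neg_div_le_one hE₂ (hTmin.trans hθ.le)
    have : 0 ≤ k₁ * exp (-E₁ / θ t) * cA t := by positivity
    nlinarith [mul_nonneg hk₂ hB.le]
  · refine sub_pos.1 (pos_of_neg_mul_le_deriv (f := fun t => θ t - Tmin) (c := h) hc.le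
      (fun t ht => (hsol t ht).2.2.sub_const Tmin) (fun t ht => ?_) (sub_pos.2 h0.2.2))
    obtain ⟨hA, hB, -⟩ := hIoo t ht
    have : 0 ≤ J₁ * k₁ * exp (-E₁ / θ t) * cA t := by positivity
    have : 0 ≤ J₂ * k₂ * exp (-E₂ / θ t) * cB t := by positivity
    nlinarith [mul_nonneg hh (sub_nonneg.2 hTminTs)]

theorem upper_bounds (hsol : IsBatchReactorSolution J₁ J₂ k₁ k₂ h E₁ E₂ Ts (Icc 0 c) cA cB θ)
    (hc : 0 < c) (hJ₁ : 0 < J₁) (hJ₂ : 0 ≤ J₂) (hk₁ : 0 < k₁) (hk₂ : 0 < k₂) (hh : 0 < h)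
    (hE₁ : 0 ≤ E₁) (hE₂ : 0 ≤ E₂) (hTmin : 0 < Tmin)
    (hTmax : (J₁ * k₁ * chat₁ + J₂ * k₂ * chat₂) / h + Ts ≤ Tmax)
    (hcase1 : E₂ ≤ E₁ → (k₁ / k₂) * chat₁ < chat₂)
    (hcase2 : E₁ < E₂ → (k₁ / k₂) * exp ((E₂ - E₁) / Tmin) * chat₁ < chat₂)
    (hup : ∀ t ∈ Ico 0 c, cA t < chat₁ ∧ cB t < chat₂ ∧ θ t < Tmax)
    (hlow : 0 < cA c ∧ 0 < cB c ∧ Tmin < θ c) :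
    cA c < chat₁ ∧ cB c < chat₂ ∧ θ c < Tmax := by
  obtain ⟨hA, hB, hθ⟩ := hlow
  obtain ⟨hA', hB', hθ'⟩ := hsol c (right_mem_Icc.2 hc.le)
  have hAc : cA c < chat₁ :=
    lt_of_forall_Ico_lt_of_hasDerivWithinAt hc hA' (fun t ht => (hup t ht).1) fun _ => by
      have : 0 < k₁ * exp (-E₁ / θ c) * cA c := by positivity
      linarith
  have hBc : cB c < chat₂ :=
    lt_of_forall_Ico_lt_of_hasDerivWithinAt hc hB' (fun t ht => (hup t ht).2.1) fun hle => by
      have := arrhenius_mul_lt hk₁.le hk₂ (hA.trans hAc).le hTmin hθ.le hcase1 hcase2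
      have : k₁ * exp (-E₁ / θ c) * cA c ≤ k₁ * exp (-E₁ / θ c) * chat₁ :=
        mul_le_mul_of_nonneg_left hAc.le (by positivity)
      have : k₂ * exp (-E₂ / θ c) * chat₂ ≤ k₂ * exp (-E₂ / θ c) * cB c :=
        mul_le_mul_of_nonneg_left hle (by positivity)
      linarith
  refine ⟨hAc, hBc, lt_of_forall_Ico_lt_of_hasDerivWithinAt hc hθ' (fun t ht => (hup t ht).2.2)
    fun hle => ?_⟩
  exact reactor_heat_rate_neg hJ₁ hJ₂ hk₁ hk₂.le hh hE₁ hE₂ hTmax hle (hTmin.trans hθ).le hA.le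
    hAc hB.le hBc.le

end IsBatchReactorSolution

end BatchReactor

theorem stmt_13_general (J₁ J₂ k₁ k₂ h E₁ E₂ Ts chat₁ chat₂ Tmin Tmax : ℝ)
    (hJ₁ : 0 < J₁) (hJ₂ : 0 < J₂) (hk₁ : 0 < k₁) (hk₂ : 0 < k₂) (hh : 0 < h)
    (hE₁ : 0 < E₁) (hE₂ : 0 < E₂)
    (hTmin : 0 < Tmin) (hTminTs : Tmin ≤ Ts)
    (hTmax : (J₁ * k₁ * chat₁ + J₂ * k₂ * chat₂) / h + Ts ≤ Tmax)
    (hcase1 : E₂ ≤ E₁ → (k₁ / k₂) * chat₁ < chat₂)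
    (hcase2 : E₁ < E₂ → (k₁ / k₂) * Real.exp ((E₂ - E₁) / Tmin) * chat₁ < chat₂)
    (τ : ℝ) (cA cB T : ℝ → ℝ)
    (hcA : ∀ t ∈ Set.Icc (0:ℝ) τ,
      HasDerivWithinAt cA (-(k₁ * Real.exp (-E₁ / T t)) * cA t) (Set.Icc 0 τ) t)
    (hcB : ∀ t ∈ Set.Icc (0:ℝ) τ,
      HasDerivWithinAt cB
        (k₁ * Real.exp (-E₁ / T t) * cA t - k₂ * Real.exp (-E₂ / T t) * cB t)
        (Set.Icc 0 τ) t)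
    (hT : ∀ t ∈ Set.Icc (0:ℝ) τ,
      HasDerivWithinAt T
        (J₁ * k₁ * Real.exp (-E₁ / T t) * cA t
          + J₂ * k₂ * Real.exp (-E₂ / T t) * cB t + h * (Ts - T t))
        (Set.Icc 0 τ) t)
    (hcA0 : cA 0 ∈ Set.Ioo 0 chat₁) (hcB0 : cB 0 ∈ Set.Ioo 0 chat₂)
    (hT0 : T 0 ∈ Set.Ioo Tmin Tmax) :
    ∀ t ∈ Set.Icc (0:ℝ) τ,
      cA t ∈ Set.Ioo 0 chat₁ ∧ cB t ∈ Set.Ioo 0 chat₂ ∧ T t ∈ Set.Ioo Tmin Tmax := by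
  have hsol : IsBatchReactorSolution J₁ J₂ k₁ k₂ h E₁ E₂ Ts (Icc 0 τ) cA cB T :=
    fun t ht => ⟨hcA t ht, hcB t ht, hT t ht⟩
  refine hsol.continuousOn.mapsTo_Icc_of_first_exit (isOpen_Ioo.prod (isOpen_Ioo.prod isOpen_Ioo))
    ⟨hcA0, hcB0, hT0⟩ ?_
  rintro c ⟨hc, hcτ⟩ hbefore
  have hsolc := hsol.mono (Icc_subset_Icc_right hcτ)
  have hlow := hsolc.lower_bounds hc hJ₁.le hJ₂.le hk₁.le hk₂.le hh.le hE₁.le hE₂.le hTmin.le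
    hTminTs fun t ht => ⟨(hbefore ht).1.1, (hbefore ht).2.1.1, (hbefore ht).2.2.1⟩
  have hup := hsolc.upper_bounds hc hJ₁ hJ₂.le hk₁ hk₂ hh hE₁.le hE₂.le hTmin hTmax hcase1 hcase2
    (fun t ht => ⟨(hbefore ht).1.2, (hbefore ht).2.1.2, (hbefore ht).2.2.2⟩) hlow
  exact ⟨⟨hlow.1, hup.1⟩, ⟨hlow.2.1, hup.2.1⟩, ⟨hlow.2.2, hup.2.2⟩⟩

/-- Positive invariance of the region `D × Ω` for the batch reactor (3.1),
asserted in Application 1: under the stated parameter conditions, every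
solution starting in `(0, chat₁) × (0, chat₂) × (Tmin, Tmax)` stays there. -/
theorem stmt_13 (J₁ J₂ k₁ k₂ h E₁ E₂ Ts chat₁ chat₂ Tmin Tmax : ℝ)
    (hJ₁ : 0 < J₁) (hJ₂ : 0 < J₂) (hk₁ : 0 < k₁) (hk₂ : 0 < k₂) (hh : 0 < h)
    (hE₁ : 0 < E₁) (hE₂ : 0 < E₂) (hTs : 0 < Ts) (hchat₁ : 0 < chat₁) (hchat₂ : 0 < chat₂)
    (hTmin : 0 < Tmin) (hTminTs : Tmin ≤ Ts)
    (hTmax : (J₁ * k₁ * chat₁ + J₂ * k₂ * chat₂) / h + Ts ≤ Tmax)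
    (hcase1 : E₂ ≤ E₁ → (k₁ / k₂) * chat₁ < chat₂)
    (hcase2 : E₁ < E₂ → (k₁ / k₂) * Real.exp ((E₂ - E₁) / Tmin) * chat₁ < chat₂)
    (τ : ℝ) (hτ : 0 < τ) (cA cB T : ℝ → ℝ)
    (hcA : ∀ t ∈ Set.Icc (0:ℝ) τ,
      HasDerivWithinAt cA (-(k₁ * Real.exp (-E₁ / T t)) * cA t) (Set.Icc 0 τ) t)
    (hcB : ∀ t ∈ Set.Icc (0:ℝ) τ,
      HasDerivWithinAt cB
        (k₁ * Real.exp (-E₁ / T t) * cA t - k₂ * Real.exp (-E₂ / T t) * cB t)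
        (Set.Icc 0 τ) t)
    (hT : ∀ t ∈ Set.Icc (0:ℝ) τ,
      HasDerivWithinAt T
        (J₁ * k₁ * Real.exp (-E₁ / T t) * cA t
          + J₂ * k₂ * Real.exp (-E₂ / T t) * cB t + h * (Ts - T t))
        (Set.Icc 0 τ) t)
    (hcA0 : cA 0 ∈ Set.Ioo 0 chat₁) (hcB0 : cB 0 ∈ Set.Ioo 0 chat₂)
    (hT0 : T 0 ∈ Set.Ioo Tmin Tmax) :
    ∀ t ∈ Set.Icc (0:ℝ) τ,
      cA t ∈ Set.Ioo 0 chat₁ ∧ cB t ∈ Set.Ioo 0 chat₂ ∧ T t ∈ Set.Ioo Tmin Tmax :=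
  stmt_13_general J₁ J₂ k₁ k₂ h E₁ E₂ Ts chat₁ chat₂ Tmin Tmax hJ₁ hJ₂ hk₁ hk₂ hh hE₁ hE₂ hTmin
    hTminTs hTmax hcase1 hcase2 τ cA cB T hcA hcB hT hcA0 hcB0 hT0
end

section
/- Assume E₁ = E₂ = E and (J₁ + J₂) * k₂ = J₁ * k₁. If cA, cB, T : ℝ → ℝ are differentiable on [0, τ] with T t > 0 and satisfy the batch reactor equations on [0, τ], then the function w t := (J₁ + J₂) * cA t + J₂ * cB t satisfies w' t = -k₂ * Real.exp (-E / T t) * w t and T' t = k₂ * Real.exp (-E / T t) * w t + h * (Ts - T t) for all t ∈ [0, τ]. (Reduced observable subsystem (3.10) of Application 1.) -/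
/-!
With a common activation energy both reactions share the Arrhenius factor `r = exp (-E / T)`.
The condition `(J₁ + J₂) * k₂ = J₁ * k₁` makes the heat release `J₁ k₁ r cA + J₂ k₂ r cB` equal
to `k₂ r w`, and `w'` is exactly minus that heat release.
-/

section SequentialReaction

variable {J₁ J₂ k₁ k₂ : ℝ}

lemma heat_release_eq_of_lumping (hdeg : (J₁ + J₂) * k₂ = J₁ * k₁) (r a b : ℝ) :
    J₁ * k₁ * r * a + J₂ * k₂ * r * b = k₂ * r * ((J₁ + J₂) * a + J₂ * b) := by
  linear_combination (-r * a) * hdeg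

lemma hasDerivWithinAt_lumped_concentration (hdeg : (J₁ + J₂) * k₂ = J₁ * k₁)
    {cA cB : ℝ → ℝ} {s : Set ℝ} {t r : ℝ}
    (hcA : HasDerivWithinAt cA (-(k₁ * r) * cA t) s t)
    (hcB : HasDerivWithinAt cB (k₁ * r * cA t - k₂ * r * cB t) s t) :
    HasDerivWithinAt (fun u => (J₁ + J₂) * cA u + J₂ * cB u)
      (-(k₂ * r) * ((J₁ + J₂) * cA t + J₂ * cB t)) s t := by
  refine ((hcA.const_mul (J₁ + J₂)).add (hcB.const_mul J₂)).congr_deriv ?_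
  linear_combination -heat_release_eq_of_lumping hdeg r (cA t) (cB t)

end SequentialReaction

theorem stmt_14_general (J₁ J₂ k₁ k₂ h E₁ E₂ E Ts τ : ℝ)
    (hE1 : E₁ = E) (hE2 : E₂ = E) (hdeg : (J₁ + J₂) * k₂ = J₁ * k₁)
    (cA cB T : ℝ → ℝ)
    (hcA : ∀ t ∈ Set.Icc (0:ℝ) τ,
      HasDerivWithinAt cA (-(k₁ * Real.exp (-E₁ / T t)) * cA t) (Set.Icc 0 τ) t)
    (hcB : ∀ t ∈ Set.Icc (0:ℝ) τ,
      HasDerivWithinAt cB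
        (k₁ * Real.exp (-E₁ / T t) * cA t - k₂ * Real.exp (-E₂ / T t) * cB t)
        (Set.Icc 0 τ) t)
    (T' : ℝ → ℝ)
    (hT' : ∀ t ∈ Set.Icc (0:ℝ) τ,
      T' t = J₁ * k₁ * Real.exp (-E₁ / T t) * cA t
        + J₂ * k₂ * Real.exp (-E₂ / T t) * cB t + h * (Ts - T t))
    (w : ℝ → ℝ) (hw : ∀ t, w t = (J₁ + J₂) * cA t + J₂ * cB t) :
    ∀ t ∈ Set.Icc (0:ℝ) τ,
      HasDerivWithinAt w (-(k₂ * Real.exp (-E / T t)) * w t) (Set.Icc 0 τ) t ∧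
      T' t = k₂ * Real.exp (-E / T t) * w t + h * (Ts - T t) := by
  subst hE1 hE2
  obtain rfl : w = fun u => (J₁ + J₂) * cA u + J₂ * cB u := funext hw
  intro t ht
  refine ⟨hasDerivWithinAt_lumped_concentration hdeg (hcA t ht) (hcB t ht), ?_⟩
  rw [hT' t ht, heat_release_eq_of_lumping hdeg]

/-- Reduced observable subsystem (3.10) of Application 1: if `E₁ = E₂ = E` and
`(J₁ + J₂) * k₂ = J₁ * k₁`, then `w = (J₁ + J₂) * cA + J₂ * cB` satisfies
`w' = -k₂ * exp (-E / T) * w` and `T' = k₂ * exp (-E / T) * w + h * (Ts - T)`. -/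
theorem stmt_14 (J₁ J₂ k₁ k₂ h E₁ E₂ E Ts τ : ℝ)
    (hJ₁ : 0 < J₁) (hJ₂ : 0 < J₂) (hk₁ : 0 < k₁) (hk₂ : 0 < k₂) (hh : 0 < h)
    (hE₁ : 0 < E₁) (hE₂ : 0 < E₂) (hTs : 0 < Ts) (hτ : 0 < τ)
    (hE1 : E₁ = E) (hE2 : E₂ = E) (hdeg : (J₁ + J₂) * k₂ = J₁ * k₁)
    (cA cB T : ℝ → ℝ) (hTpos : ∀ t ∈ Set.Icc (0:ℝ) τ, 0 < T t)
    (hcA : ∀ t ∈ Set.Icc (0:ℝ) τ,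
      HasDerivWithinAt cA (-(k₁ * Real.exp (-E₁ / T t)) * cA t) (Set.Icc 0 τ) t)
    (hcB : ∀ t ∈ Set.Icc (0:ℝ) τ,
      HasDerivWithinAt cB
        (k₁ * Real.exp (-E₁ / T t) * cA t - k₂ * Real.exp (-E₂ / T t) * cB t)
        (Set.Icc 0 τ) t)
    (T' : ℝ → ℝ)
    (hT : ∀ t ∈ Set.Icc (0:ℝ) τ, HasDerivWithinAt T (T' t) (Set.Icc 0 τ) t)
    (hT' : ∀ t ∈ Set.Icc (0:ℝ) τ,
      T' t = J₁ * k₁ * Real.exp (-E₁ / T t) * cA t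
        + J₂ * k₂ * Real.exp (-E₂ / T t) * cB t + h * (Ts - T t))
    (w : ℝ → ℝ) (hw : ∀ t, w t = (J₁ + J₂) * cA t + J₂ * cB t) :
    ∀ t ∈ Set.Icc (0:ℝ) τ,
      HasDerivWithinAt w (-(k₂ * Real.exp (-E / T t)) * w t) (Set.Icc 0 τ) t ∧
      T' t = k₂ * Real.exp (-E / T t) * w t + h * (Ts - T t) :=
  stmt_14_general J₁ J₂ k₁ k₂ h E₁ E₂ E Ts τ hE1 hE2 hdeg cA cB T hcA hcB T' hT' w hw
end

section
/- Assume E₁ = E₂ = E > 0. Let T : ℝ → ℝ be continuous on [0, r] with T t > 0 for all t ∈ [0, r]. If for all t ∈ [0, r] the identity J₁ * Real.exp (-E / T t) * Real.exp (-∫ s in (0:ℝ)..t, k₁ * Real.exp (-E / T s)) + J₂ * k₂ * Real.exp (-E / T t) * (∫ τ in (0:ℝ)..t, Real.exp (-E / T τ - (∫ s in τ..t, k₂ * Real.exp (-E / T s)) - ∫ s in (0:ℝ)..τ, k₁ * Real.exp (-E / T s))) = J₁ * Real.exp (-E / T t) * Real.exp (-∫ s in (0:ℝ)..t, k₂ *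 Real.exp (-E / T s)) holds, then (J₁ + J₂) * k₂ = J₁ * k₁. (Case 1, E₁ = E₂, of the strong observability proof in Application 1: the indistinguishability identity (3.5) forces the parameter degeneracy (J₁ + J₂) k₂ = J₁ k₁.) -/
/-!
Write `g = exp (-E / T)` and `Γ u = ∫₀ᵘ g`. Since `∫ᵤʳ k₂ g = k₂ (Γ r - Γ u)`, the identity at
`t = r`, divided by `g r * exp (-k₂ Γ r)`, becomes `J₁ exp ((k₂ - k₁) Γ r) + J₂ k₂ ψ = J₁` with
`ψ = ∫₀ʳ g u exp ((k₂ - k₁) Γ u) du > 0`. As `Γ' = g`, the fundamental theorem of calculus gives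
`exp ((k₂ - k₁) Γ r) - 1 = (k₂ - k₁) ψ`, hence `(J₁ (k₂ - k₁) + J₂ k₂) ψ = 0`.
-/

open MeasureTheory intervalIntegral
open Real Set

section Primitive

variable {g : ℝ → ℝ} {a b : ℝ}

theorem continuousOn_primitive_Icc (hab : a ≤ b) (hg : ContinuousOn g (Icc a b)) :
    ContinuousOn (fun u => ∫ s in a..u, g s) (Icc a b) := by
  rw [← uIcc_of_le hab] at hg ⊢
  exact continuousOn_primitive_interval (hg.integrableOn_compact isCompact_uIcc)

theorem hasDerivAt_primitive_of_mem_Ioo (hg : ContinuousOn g (Icc a b)) {x : ℝ}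
    (hx : x ∈ Ioo a b) : HasDerivAt (fun u => ∫ s in a..u, g s) (g x) x :=
  integral_hasDerivAt_right
    ((hg.mono (Icc_subset_Icc le_rfl hx.2.le)).intervalIntegrable_of_Icc hx.1.le)
    ((hg.mono Ioo_subset_Icc_self).stronglyMeasurableAtFilter isOpen_Ioo x hx)
    (hg.continuousAt (Icc_mem_nhds hx.1 hx.2))

theorem mul_integral_mul_exp_mul_primitive (hab : a ≤ b) (hg : ContinuousOn g (Icc a b))
    (c : ℝ) :
    c * ∫ u in a..b, g u * exp (c * ∫ s in a..u, g s) = exp (c * ∫ s in a..b, g s) - 1 := by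
  have hexp : ContinuousOn (fun u => exp (c * ∫ s in a..u, g s)) (Icc a b) :=
    (continuousOn_const.mul (continuousOn_primitive_Icc hab hg)).rexp
  rw [← intervalIntegral.integral_const_mul,
    integral_eq_sub_of_hasDeriv_right_of_le
      (f' := fun u => c * (g u * exp (c * ∫ s in a..u, g s))) hab hexp (fun x hx => ?_)
      ((continuousOn_const.mul (hg.mul hexp)).intervalIntegrable_of_Icc hab),
    integral_same, mul_zero, exp_zero]
  convert ((hasDerivAt_primitive_of_mem_Ioo hg hx).const_mul c).exp.hasDerivWithinAt using 1
  ring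

theorem integral_mul_exp_mul_primitive_pos (hab : a < b) (hg : ContinuousOn g (Icc a b))
    (hg_pos : ∀ x ∈ Ioo a b, 0 < g x) (c : ℝ) :
    0 < ∫ u in a..b, g u * exp (c * ∫ s in a..u, g s) := by
  have hexp : ContinuousOn (fun u => exp (c * ∫ s in a..u, g s)) (Icc a b) :=
    (continuousOn_const.mul (continuousOn_primitive_Icc hab.le hg)).rexp
  exact intervalIntegral_pos_of_pos_on ((hg.mul hexp).intervalIntegrable_of_Icc hab.le)
    (fun x hx => mul_pos (hg_pos x hx) (exp_pos _)) hab

end Primitive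

theorem integral_exp_sub_integral_sub_integral {h : ℝ → ℝ} {r : ℝ} (hr : 0 ≤ r)
    (hh : ContinuousOn h (Icc 0 r)) (k₁ k₂ : ℝ) :
    ∫ u in (0:ℝ)..r,
        exp (h u - (∫ s in u..r, k₂ * exp (h s)) - ∫ s in (0:ℝ)..u, k₁ * exp (h s)) =
      exp (-(k₂ * ∫ s in (0:ℝ)..r, exp (h s))) *
        ∫ u in (0:ℝ)..r, exp (h u) * exp ((k₂ - k₁) * ∫ s in (0:ℝ)..u, exp (h s)) := by
  rw [← intervalIntegral.integral_const_mul]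
  refine integral_congr fun u hu => ?_
  rw [uIcc_of_le hr] at hu
  have hint : ∀ v ∈ Icc 0 r, IntervalIntegrable (fun s => exp (h s)) volume 0 v := fun v hv =>
    (hh.rexp.mono (Icc_subset_Icc le_rfl hv.2)).intervalIntegrable_of_Icc hv.1
  simp only [intervalIntegral.integral_const_mul,
    ← integral_interval_sub_left (hint r ⟨hr, le_rfl⟩) (hint u hu), ← exp_add]
  ring_nf

theorem add_mul_eq_mul_of_indistinguishable {h : ℝ → ℝ} {J₁ J₂ k₁ k₂ r : ℝ} (hr : 0 < r)
    (hh : ContinuousOn h (Icc 0 r))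
    (hid : J₁ * exp (h r) * exp (-∫ s in (0:ℝ)..r, k₁ * exp (h s))
        + J₂ * k₂ * exp (h r)
          * (∫ u in (0:ℝ)..r, exp (h u - (∫ s in u..r, k₂ * exp (h s))
              - ∫ s in (0:ℝ)..u, k₁ * exp (h s)))
        = J₁ * exp (h r) * exp (-∫ s in (0:ℝ)..r, k₂ * exp (h s))) :
    (J₁ + J₂) * k₂ = J₁ * k₁ := by
  set Γ : ℝ → ℝ := fun u => ∫ s in (0:ℝ)..u, exp (h s)
  set ψ := ∫ u in (0:ℝ)..r, exp (h u) * exp ((k₂ - k₁) * Γ u)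
  have hψ : 0 < ψ := integral_mul_exp_mul_primitive_pos hr hh.rexp (fun _ _ => exp_pos _) _
  have hψ_eq : (k₂ - k₁) * ψ = exp ((k₂ - k₁) * Γ r) - 1 :=
    mul_integral_mul_exp_mul_primitive hr.le hh.rexp _
  rw [integral_exp_sub_integral_sub_integral hr.le hh, intervalIntegral.integral_const_mul,
    intervalIntegral.integral_const_mul] at hid
  have hP : 0 < exp (h r) * exp (-(k₂ * Γ r)) := by positivity
  have hexp_k₁ : exp (-(k₁ * Γ r)) = exp ((k₂ - k₁) * Γ r) * exp (-(k₂ * Γ r)) := by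
    rw [← exp_add]; ring_nf
  rw [hexp_k₁] at hid
  have hcoeff : ((J₁ + J₂) * k₂ - J₁ * k₁) * ψ = 0 := by
    apply mul_left_cancel₀ hP.ne'
    linear_combination hid + J₁ * exp (h r) * exp (-(k₂ * Γ r)) * hψ_eq
  linarith [(mul_eq_zero.mp hcoeff).resolve_right hψ.ne']

theorem stmt_16_general (J₁ J₂ k₁ k₂ E r : ℝ)
    (hr : 0 < r)
    (T : ℝ → ℝ) (hT : ContinuousOn T (Set.Icc 0 r))
    (hTpos : ∀ t ∈ Set.Icc (0:ℝ) r, 0 < T t)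
    (hid : ∀ t ∈ Set.Icc (0:ℝ) r,
      J₁ * Real.exp (-E / T t)
          * Real.exp (-∫ s in (0:ℝ)..t, k₁ * Real.exp (-E / T s))
        + J₂ * k₂ * Real.exp (-E / T t)
          * (∫ u in (0:ℝ)..t, Real.exp (-E / T u
              - (∫ s in u..t, k₂ * Real.exp (-E / T s))
              - ∫ s in (0:ℝ)..u, k₁ * Real.exp (-E / T s)))
        = J₁ * Real.exp (-E / T t)
          * Real.exp (-∫ s in (0:ℝ)..t, k₂ * Real.exp (-E / T s))) :
    (J₁ + J₂) * k₂ = J₁ * k₁ :=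
  add_mul_eq_mul_of_indistinguishable (h := fun t => -E / T t) hr
    (continuousOn_const.div hT fun t ht => (hTpos t ht).ne') (hid r ⟨hr.le, le_rfl⟩)

/-- Case 1 (`E₁ = E₂ = E`) of the strong observability proof in Application 1:
the indistinguishability identity (3.5) on `[0, r]` forces the parameter
degeneracy `(J₁ + J₂) * k₂ = J₁ * k₁`. -/
theorem stmt_16 (J₁ J₂ k₁ k₂ E r : ℝ)
    (hJ₁ : 0 < J₁) (hJ₂ : 0 < J₂) (hk₁ : 0 < k₁) (hk₂ : 0 < k₂)
    (hE : 0 < E) (hr : 0 < r)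
    (T : ℝ → ℝ) (hT : ContinuousOn T (Set.Icc 0 r))
    (hTpos : ∀ t ∈ Set.Icc (0:ℝ) r, 0 < T t)
    (hid : ∀ t ∈ Set.Icc (0:ℝ) r,
      J₁ * Real.exp (-E / T t)
          * Real.exp (-∫ s in (0:ℝ)..t, k₁ * Real.exp (-E / T s))
        + J₂ * k₂ * Real.exp (-E / T t)
          * (∫ u in (0:ℝ)..t, Real.exp (-E / T u
              - (∫ s in u..t, k₂ * Real.exp (-E / T s))
              - ∫ s in (0:ℝ)..u, k₁ * Real.exp (-E / T s)))
        = J₁ * Real.exp (-E / T t)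
          * Real.exp (-∫ s in (0:ℝ)..t, k₂ * Real.exp (-E / T s))) :
    (J₁ + J₂) * k₂ = J₁ * k₁ :=
  stmt_16_general J₁ J₂ k₁ k₂ E r hr T hT hTpos hid
end

section
/- Let (x₁, x₂, y) and (z₁, z₂, w) be two triples of differentiable functions on [0, r] (r > 0) satisfying the harmonic oscillator system: y' t = x₁ t, x₁' t = x₂ t * y t, x₂' t = 0, and w' t = z₁ t, z₁' t = z₂ t * w t, z₂' t = 0 for all t ∈ [0, r]. If the outputs coincide, w t = y t for all t ∈ [0, r], and (y 0)^2 + (x₁ 0)^2 > 0, then x₁ t = z₁ t and x₂ t = z₂ t for all t ∈ [0, r]. (Strong observability of system (3.11) in Application 2: only initial states on the manifold y = x₁ = 0 can give identical output responses.) -/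
/-!
Both `x₁` and `z₁` are the derivative of the common output `y = w`, so they agree; differentiating
once more, `x₂ y = z₂ y`, where `x₂` and `z₂` are constants. If these constants differed, `y` would
vanish identically, hence so would its derivative `x₁`, contradicting `y 0 ^ 2 + x₁ 0 ^ 2 > 0`.
-/

open Set

theorem HasDerivWithinAt.eq_of_eqOn {𝕜 F : Type*} [NontriviallyNormedField 𝕜]
    [NormedAddCommGroup F] [NormedSpace 𝕜 F] {f g : 𝕜 → F} {f' g' : F} {s : Set 𝕜} {x : 𝕜}
    (hf : HasDerivWithinAt f f' s x) (hg : HasDerivWithinAt g g' s x) (hfg : EqOn f g s)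
    (hx : x ∈ s) (hs : UniqueDiffWithinAt 𝕜 s x) : f' = g' :=
  hs.eq_deriv s hf (hg.congr_of_mem (fun _ ht => hfg ht) hx)

theorem Convex.is_const_of_hasDerivWithinAt_zero {F : Type*} [NormedAddCommGroup F]
    [NormedSpace ℝ F] {f : ℝ → F} {s : Set ℝ} (hs : Convex ℝ s)
    (hf : ∀ x ∈ s, HasDerivWithinAt f 0 s x) {x y : ℝ} (hx : x ∈ s) (hy : y ∈ s) :
    f x = f y := by
  have h := hs.norm_image_sub_le_of_norm_hasDerivWithin_le hf (C := 0)
    (fun _ _ => by rw [norm_zero]) hy hx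
  rwa [zero_mul, norm_le_zero_iff, sub_eq_zero] at h

/-- Strong observability of the harmonic oscillator system (3.11) in
Application 2: if two solutions of `ẏ = x₁`, `ẋ₁ = x₂ y`, `ẋ₂ = 0` on `[0, r]`
produce the same output `w = y`, and `(y 0)² + (x₁ 0)² > 0`, then the
unmeasured states coincide: `x₁ = z₁` and `x₂ = z₂` on `[0, r]`. -/
theorem stmt_17 (r : ℝ) (hr : 0 < r)
    (x₁ x₂ y z₁ z₂ w : ℝ → ℝ)
    (hy : ∀ t ∈ Set.Icc (0:ℝ) r, HasDerivWithinAt y (x₁ t) (Set.Icc 0 r) t)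
    (hx₁ : ∀ t ∈ Set.Icc (0:ℝ) r,
      HasDerivWithinAt x₁ (x₂ t * y t) (Set.Icc 0 r) t)
    (hx₂ : ∀ t ∈ Set.Icc (0:ℝ) r, HasDerivWithinAt x₂ 0 (Set.Icc 0 r) t)
    (hw : ∀ t ∈ Set.Icc (0:ℝ) r, HasDerivWithinAt w (z₁ t) (Set.Icc 0 r) t)
    (hz₁ : ∀ t ∈ Set.Icc (0:ℝ) r,
      HasDerivWithinAt z₁ (z₂ t * w t) (Set.Icc 0 r) t)
    (hz₂ : ∀ t ∈ Set.Icc (0:ℝ) r, HasDerivWithinAt z₂ 0 (Set.Icc 0 r) t)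
    (hout : ∀ t ∈ Set.Icc (0:ℝ) r, w t = y t)
    (hinit : (y 0) ^ 2 + (x₁ 0) ^ 2 > 0) :
    ∀ t ∈ Set.Icc (0:ℝ) r, x₁ t = z₁ t ∧ x₂ t = z₂ t := by
  have hI := uniqueDiffOn_Icc hr
  have h0 : (0 : ℝ) ∈ Icc 0 r := left_mem_Icc.2 hr.le
  have hx₂c t (ht : t ∈ Icc 0 r) := (convex_Icc 0 r).is_const_of_hasDerivWithinAt_zero hx₂ ht h0
  have hz₂c t (ht : t ∈ Icc 0 r) := (convex_Icc 0 r).is_const_of_hasDerivWithinAt_zero hz₂ ht h0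
  have hxz₁ : EqOn x₁ z₁ (Icc 0 r) := fun t ht =>
    (hy t ht).eq_of_eqOn (hw t ht) (fun s hs => (hout s hs).symm) ht (hI t ht)
  have hprod : ∀ t ∈ Icc 0 r, (x₂ 0 - z₂ 0) * y t = 0 := fun t ht => by
    have h := (hx₁ t ht).eq_of_eqOn (hz₁ t ht) hxz₁ ht (hI t ht)
    rw [hx₂c t ht, hz₂c t ht, hout t ht] at h
    linear_combination h
  have hx₂z₂ : x₂ 0 = z₂ 0 := by
    by_contra hne
    have hy0 : EqOn y 0 (Icc 0 r) := fun t ht =>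
      (mul_eq_zero.1 (hprod t ht)).resolve_left (sub_ne_zero.2 hne)
    have hx₁0 : x₁ 0 = 0 := (hy 0 h0).eq_of_eqOn (hasDerivWithinAt_const 0 _ 0) hy0 h0 (hI 0 h0)
    simp [hy0 h0, hx₁0] at hinit
  exact fun t ht => ⟨hxz₁ ht, by rw [hx₂c t ht, hz₂c t ht, hx₂z₂]⟩
end
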